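/- arXiv:2604.03787 — 8 statements merged into one kernel-verified Lean document; each statement's English description precedes it below -/
import Mathlib

section
/- Let A be a nonzero n×n nonnegative matrix and A^(0), A^(1), ... the Sinkhorn–Knopp iterates with uniform targets (rows normalized at even steps, columns at odd steps), all normalizations well defined. Then for any odd k: min_i r_i(A^(k)) ≤ min_i r_i(A^(k+2)) ≤ 1 ≤ max_i r_i(A^(k+2)) ≤ max_i r_i(A^(k)); for any even k: min_j c_j(A^(k)) ≤ min_j c_j(A^(k+2)) ≤ 1 ≤ max_j c_j(A^(k+2)) ≤ max_j c_j(A^(k)); and for any odd k: (max_j c_j(A^(k-1)))^{-1} ≤ min_i r_i(A^(k)) ≤ 1 ≤ max_i r_i(A^(k)) ≤ (min_j c_j(A^(k-1)))^{-1}. -/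
open Finset Matrix

/-- Row sum of a matrix. -/
def rsum {m n : ℕ} (A : Matrix (Fin m) (Fin n) ℝ) (i : Fin m) : ℝ := ∑ j, A i j

/-- Column sum of a matrix. -/
def csum {m n : ℕ} (A : Matrix (Fin m) (Fin n) ℝ) (j : Fin n) : ℝ := ∑ i, A i j

/-!
If every row of `C` sums to `1`, then each row sum of the column-normalized matrix `C i j / c j`
(`c` the column sums of `C`) is a convex combination of the `1 / c j`, so it lies between
`(max c)⁻¹` and `(min c)⁻¹`; likewise with rows and columns exchanged. Applied twice, this keeps
the extreme row (or column) sums two steps later within those of now. The row sums of a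
column-stochastic `n × n` matrix add up to `n`, so the smallest is at most `1` and the largest
at least `1`.
-/

section Extrema

variable {ι κ ν : Type*}

theorem iInf_le_one_and_one_le_iSup_of_sum_eq_card [Fintype ι] [Nonempty ι] {f : ι → ℝ}
    (hf : ∑ i, f i = Fintype.card ι) : ⨅ i, f i ≤ 1 ∧ 1 ≤ ⨆ i, f i := by
  obtain ⟨i, -, hi⟩ := exists_le_of_sum_le (f := f) (g := 1) univ_nonempty (by simp [hf])
  obtain ⟨i', -, hi'⟩ := exists_le_of_sum_le (f := 1) (g := f) univ_nonempty (by simp [hf])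
  exact ⟨(ciInf_le (Set.finite_range f).bddBelow i).trans hi,
    hi'.trans (le_ciSup (Set.finite_range f).bddAbove i')⟩

variable [Finite ι] [Nonempty ι]

theorem iInf_pos_of_forall_pos {f : ι → ℝ} (hf : ∀ i, 0 < f i) : 0 < ⨅ i, f i := by
  obtain ⟨i, hi⟩ := exists_eq_ciInf_of_finite (f := f)
  exact hi ▸ hf i

theorem iSup_pos_of_forall_pos {f : ι → ℝ} (hf : ∀ i, 0 < f i) : 0 < ⨆ i, f i :=
  (hf (Classical.arbitrary ι)).trans_le (le_ciSup (Set.finite_range f).bddAbove _)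

theorem iInf_le_iInf_and_iSup_le_iSup_of_mem_Icc_inv [Finite κ] [Nonempty κ] [Nonempty ν]
    {f : ι → ℝ} {g : κ → ℝ} {h : ν → ℝ} (hf : ∀ i, 0 < f i)
    (hg : ∀ j, g j ∈ Set.Icc (⨆ i, f i)⁻¹ (⨅ i, f i)⁻¹)
    (hh : ∀ l, h l ∈ Set.Icc (⨆ j, g j)⁻¹ (⨅ j, g j)⁻¹) :
    (⨅ i, f i) ≤ ⨅ l, h l ∧ (⨆ l, h l) ≤ ⨆ i, f i := by
  have hg_pos : ∀ j, 0 < g j := fun j =>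
    (inv_pos.mpr (iSup_pos_of_forall_pos hf)).trans_le (hg j).1
  have hsup_g : (⨆ j, g j) ≤ (⨅ i, f i)⁻¹ := ciSup_le fun j => (hg j).2
  have hinf_g : (⨆ i, f i)⁻¹ ≤ ⨅ j, g j := le_ciInf fun j => (hg j).1
  constructor
  · calc (⨅ i, f i) = ((⨅ i, f i)⁻¹)⁻¹ := (inv_inv _).symm
      _ ≤ (⨆ j, g j)⁻¹ := inv_anti₀ (iSup_pos_of_forall_pos hg_pos) hsup_g
      _ ≤ ⨅ l, h l := le_ciInf fun l => (hh l).1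
  · calc (⨆ l, h l) ≤ (⨅ j, g j)⁻¹ := ciSup_le fun l => (hh l).2
      _ ≤ ((⨆ i, f i)⁻¹)⁻¹ := inv_anti₀ (inv_pos.mpr (iSup_pos_of_forall_pos hf)) hinf_g
      _ = ⨆ i, f i := inv_inv _

end Extrema

section Normalization

variable {m n : ℕ} {B C : Matrix (Fin m) (Fin n) ℝ}

theorem sum_rsum_eq_sum_csum (A : Matrix (Fin m) (Fin n) ℝ) : ∑ i, rsum A i = ∑ j, csum A j :=
  sum_comm

theorem rsum_eq_one_of_eq_div_rsum {i : Fin m} (hB : ∀ j, B i j = C i j / rsum C i)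
    (hC : rsum C i ≠ 0) : rsum B i = 1 := by
  simp only [rsum, hB, ← sum_div]
  exact div_self hC

theorem csum_eq_one_of_eq_div_csum {j : Fin n} (hB : ∀ i, B i j = C i j / csum C j)
    (hC : csum C j ≠ 0) : csum B j = 1 :=
  rsum_eq_one_of_eq_div_rsum (B := Bᵀ) (C := Cᵀ) hB hC

theorem rsum_mem_Icc_of_eq_div_csum {i : Fin m} (hB : ∀ j, B i j = C i j / csum C j)
    (hC : ∀ j, 0 ≤ C i j) (hc : ∀ j, 0 < csum C j) (hr : rsum C i = 1) :
    rsum B i ∈ Set.Icc (⨆ j, csum C j)⁻¹ (⨅ j, csum C j)⁻¹ := by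
  have : Nonempty (Fin n) := by
    by_contra h
    rw [not_nonempty_iff] at h
    simp [rsum] at hr
  have hrB : rsum B i = ∑ j, C i j / csum C j := sum_congr rfl fun j _ => hB j
  have hmean (x : ℝ) : ∑ j, C i j / x = x⁻¹ := by rw [← sum_div, ← rsum, hr, one_div]
  rw [hrB]
  constructor
  · calc (⨆ j, csum C j)⁻¹ = ∑ j, C i j / ⨆ j, csum C j := (hmean _).symm
      _ ≤ ∑ j, C i j / csum C j := sum_le_sum fun j _ =>
        div_le_div_of_nonneg_left (hC j) (hc j) (le_ciSup (Set.finite_range _).bddAbove j)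
  · calc ∑ j, C i j / csum C j ≤ ∑ j, C i j / ⨅ j, csum C j := sum_le_sum fun j _ =>
          div_le_div_of_nonneg_left (hC j) (iInf_pos_of_forall_pos hc)
            (ciInf_le (Set.finite_range _).bddBelow j)
      _ = (⨅ j, csum C j)⁻¹ := hmean _

theorem csum_mem_Icc_of_eq_div_rsum {j : Fin n} (hB : ∀ i, B i j = C i j / rsum C i)
    (hC : ∀ i, 0 ≤ C i j) (hr : ∀ i, 0 < rsum C i) (hc : csum C j = 1) :
    csum B j ∈ Set.Icc (⨆ i, rsum C i)⁻¹ (⨅ i, rsum C i)⁻¹ :=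
  rsum_mem_Icc_of_eq_div_csum (B := Bᵀ) (C := Cᵀ) hB hC hr hc

end Normalization

structure IsSinkhornKnopp {n : ℕ} (A : Matrix (Fin n) (Fin n) ℝ)
    (S : ℕ → Matrix (Fin n) (Fin n) ℝ) : Prop where
  nonneg : ∀ i j, 0 ≤ A i j
  rsum_pos : ∀ i, 0 < rsum A i
  iterate_rsum_pos : ∀ k i, 0 < rsum (S k) i
  iterate_csum_pos : ∀ k j, 0 < csum (S k) j
  zero_eq : ∀ i j, S 0 i j = A i j / rsum A i
  odd_eq : ∀ k, Odd k → ∀ i j, S k i j = S (k - 1) i j / csum (S (k - 1)) j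
  even_eq : ∀ k, 0 < k → Even k → ∀ i j, S k i j = S (k - 1) i j / rsum (S (k - 1)) i

namespace IsSinkhornKnopp

variable {n : ℕ} {A : Matrix (Fin n) (Fin n) ℝ} {S : ℕ → Matrix (Fin n) (Fin n) ℝ} {k : ℕ}

theorem succ_eq_of_even (hS : IsSinkhornKnopp A S) (hk : Even k) (i j : Fin n) :
    S (k + 1) i j = S k i j / csum (S k) j :=
  hS.odd_eq (k + 1) hk.add_one i j

theorem succ_eq_of_odd (hS : IsSinkhornKnopp A S) (hk : Odd k) (i j : Fin n) :
    S (k + 1) i j = S k i j / rsum (S k) i :=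
  hS.even_eq (k + 1) k.succ_pos hk.add_one i j

theorem iterate_nonneg (hS : IsSinkhornKnopp A S) (k : ℕ) (i j : Fin n) : 0 ≤ S k i j := by
  induction k generalizing i j with
  | zero => rw [hS.zero_eq]; exact div_nonneg (hS.nonneg i j) (hS.rsum_pos i).le
  | succ k ih =>
    rcases k.even_or_odd with hk | hk
    · rw [hS.succ_eq_of_even hk]; exact div_nonneg (ih i j) (hS.iterate_csum_pos k j).le
    · rw [hS.succ_eq_of_odd hk]; exact div_nonneg (ih i j) (hS.iterate_rsum_pos k i).le

theorem rsum_eq_one (hS : IsSinkhornKnopp A S) (hk : Even k) (i : Fin n) : rsum (S k) i = 1 := by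
  obtain rfl | hk0 := k.eq_zero_or_pos
  · exact rsum_eq_one_of_eq_div_rsum (hS.zero_eq i) (hS.rsum_pos i).ne'
  · exact rsum_eq_one_of_eq_div_rsum (hS.even_eq k hk0 hk i) (hS.iterate_rsum_pos _ i).ne'

theorem csum_eq_one (hS : IsSinkhornKnopp A S) (hk : Odd k) (j : Fin n) : csum (S k) j = 1 :=
  csum_eq_one_of_eq_div_csum (hS.odd_eq k hk · j) (hS.iterate_csum_pos _ j).ne'

theorem rsum_succ_mem_Icc (hS : IsSinkhornKnopp A S) (hk : Even k) (i : Fin n) :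
    rsum (S (k + 1)) i ∈ Set.Icc (⨆ j, csum (S k) j)⁻¹ (⨅ j, csum (S k) j)⁻¹ :=
  rsum_mem_Icc_of_eq_div_csum (hS.succ_eq_of_even hk i) (hS.iterate_nonneg k i)
    (hS.iterate_csum_pos k) (hS.rsum_eq_one hk i)

theorem csum_succ_mem_Icc (hS : IsSinkhornKnopp A S) (hk : Odd k) (j : Fin n) :
    csum (S (k + 1)) j ∈ Set.Icc (⨆ i, rsum (S k) i)⁻¹ (⨅ i, rsum (S k) i)⁻¹ :=
  csum_mem_Icc_of_eq_div_rsum (hS.succ_eq_of_odd hk · j) (hS.iterate_nonneg k · j)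
    (hS.iterate_rsum_pos k) (hS.csum_eq_one hk j)

variable [Nonempty (Fin n)]

theorem iInf_rsum_le_one_and_one_le_iSup_rsum (hS : IsSinkhornKnopp A S) (hk : Odd k) :
    (⨅ i, rsum (S k) i) ≤ 1 ∧ 1 ≤ ⨆ i, rsum (S k) i :=
  iInf_le_one_and_one_le_iSup_of_sum_eq_card <| by
    simp [sum_rsum_eq_sum_csum, hS.csum_eq_one hk]

theorem iInf_csum_le_one_and_one_le_iSup_csum (hS : IsSinkhornKnopp A S) (hk : Even k) :
    (⨅ j, csum (S k) j) ≤ 1 ∧ 1 ≤ ⨆ j, csum (S k) j :=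
  iInf_le_one_and_one_le_iSup_of_sum_eq_card <| by
    simp [← sum_rsum_eq_sum_csum, hS.rsum_eq_one hk]

end IsSinkhornKnopp

theorem stmt1_general (n : ℕ) (hn : 0 < n) (A : Matrix (Fin n) (Fin n) ℝ)
    (hA : ∀ i j, 0 ≤ A i j)
    (S : ℕ → Matrix (Fin n) (Fin n) ℝ)
    (hr0 : ∀ i, 0 < rsum A i)
    (hrow : ∀ k i, 0 < rsum (S k) i) (hcol : ∀ k j, 0 < csum (S k) j)
    (h0 : ∀ i j, S 0 i j = A i j / rsum A i)
    (hodd : ∀ k, Odd k → ∀ i j, S k i j = S (k - 1) i j / csum (S (k - 1)) j)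
    (heven : ∀ k, 0 < k → Even k → ∀ i j, S k i j = S (k - 1) i j / rsum (S (k - 1)) i) :
    (∀ k, Odd k →
      (⨅ i, rsum (S k) i) ≤ (⨅ i, rsum (S (k + 2)) i) ∧
      (⨅ i, rsum (S (k + 2)) i) ≤ 1 ∧
      1 ≤ (⨆ i, rsum (S (k + 2)) i) ∧
      (⨆ i, rsum (S (k + 2)) i) ≤ (⨆ i, rsum (S k) i)) ∧
    (∀ k, Even k →
      (⨅ j, csum (S k) j) ≤ (⨅ j, csum (S (k + 2)) j) ∧
      (⨅ j, csum (S (k + 2)) j) ≤ 1 ∧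
      1 ≤ (⨆ j, csum (S (k + 2)) j) ∧
      (⨆ j, csum (S (k + 2)) j) ≤ (⨆ j, csum (S k) j)) ∧
    (∀ k, Odd k →
      (⨆ j, csum (S (k - 1)) j)⁻¹ ≤ (⨅ i, rsum (S k) i) ∧
      (⨅ i, rsum (S k) i) ≤ 1 ∧
      1 ≤ (⨆ i, rsum (S k) i) ∧
      (⨆ i, rsum (S k) i) ≤ (⨅ j, csum (S (k - 1)) j)⁻¹) := by
  have : Nonempty (Fin n) := Fin.pos_iff_nonempty.mp hn
  have hS : IsSinkhornKnopp A S := ⟨hA, hr0, hrow, hcol, h0, hodd, heven⟩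
  refine ⟨fun k hk => ?_, fun k hk => ?_, fun k hk => ?_⟩
  · obtain ⟨hinf, hsup⟩ := iInf_le_iInf_and_iSup_le_iSup_of_mem_Icc_inv (hrow k)
      (hS.csum_succ_mem_Icc hk) (hS.rsum_succ_mem_Icc hk.add_one)
    obtain ⟨hle, hge⟩ := hS.iInf_rsum_le_one_and_one_le_iSup_rsum hk.add_one.add_one
    exact ⟨hinf, hle, hge, hsup⟩
  · obtain ⟨hinf, hsup⟩ := iInf_le_iInf_and_iSup_le_iSup_of_mem_Icc_inv (hcol k)
      (hS.rsum_succ_mem_Icc hk) (hS.csum_succ_mem_Icc hk.add_one)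
    obtain ⟨hle, hge⟩ := hS.iInf_csum_le_one_and_one_le_iSup_csum hk.add_one.add_one
    exact ⟨hinf, hle, hge, hsup⟩
  · obtain ⟨k, rfl⟩ : ∃ l, k = l + 1 := ⟨k - 1, (Nat.sub_add_cancel hk.pos).symm⟩
    have hk' : Even k := Nat.not_odd_iff_even.mp (Nat.odd_add_one.mp hk)
    obtain ⟨hle, hge⟩ := hS.iInf_rsum_le_one_and_one_le_iSup_rsum hk
    rw [Nat.add_sub_cancel]
    exact ⟨le_ciInf fun i => (hS.rsum_succ_mem_Icc hk' i).1, hle, hge,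
      ciSup_le fun i => (hS.rsum_succ_mem_Icc hk' i).2⟩

theorem stmt1 (n : ℕ) (hn : 0 < n) (A : Matrix (Fin n) (Fin n) ℝ)
    (hA : ∀ i j, 0 ≤ A i j) (hA0 : A ≠ 0)
    (S : ℕ → Matrix (Fin n) (Fin n) ℝ)
    (hr0 : ∀ i, 0 < rsum A i)
    (hrow : ∀ k i, 0 < rsum (S k) i) (hcol : ∀ k j, 0 < csum (S k) j)
    (h0 : ∀ i j, S 0 i j = A i j / rsum A i)
    (hodd : ∀ k, Odd k → ∀ i j, S k i j = S (k - 1) i j / csum (S (k - 1)) j)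
    (heven : ∀ k, 0 < k → Even k → ∀ i j, S k i j = S (k - 1) i j / rsum (S (k - 1)) i) :
    (∀ k, Odd k →
      (⨅ i, rsum (S k) i) ≤ (⨅ i, rsum (S (k + 2)) i) ∧
      (⨅ i, rsum (S (k + 2)) i) ≤ 1 ∧
      1 ≤ (⨆ i, rsum (S (k + 2)) i) ∧
      (⨆ i, rsum (S (k + 2)) i) ≤ (⨆ i, rsum (S k) i)) ∧
    (∀ k, Even k →
      (⨅ j, csum (S k) j) ≤ (⨅ j, csum (S (k + 2)) j) ∧
      (⨅ j, csum (S (k + 2)) j) ≤ 1 ∧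
      1 ≤ (⨆ j, csum (S (k + 2)) j) ∧
      (⨆ j, csum (S (k + 2)) j) ≤ (⨆ j, csum (S k) j)) ∧
    (∀ k, Odd k →
      (⨆ j, csum (S (k - 1)) j)⁻¹ ≤ (⨅ i, rsum (S k) i) ∧
      (⨅ i, rsum (S k) i) ≤ 1 ∧
      1 ≤ (⨆ i, rsum (S k) i) ∧
      (⨆ i, rsum (S k) i) ≤ (⨅ j, csum (S (k - 1)) j)⁻¹) :=
  stmt1_general n hn A hA S hr0 hrow hcol h0 hodd heven
end

section
/- Let A be a nonzero n×n nonnegative matrix and A^(0), A^(1), ... the Sinkhorn–Knopp iterates with uniform targets, all normalizations well defined. For any odd k ≥ 1, the product over i of the row sums satisfies ∏_{i∈[n]} r_i(A^(k)) ≤ 1, and the permanent satisfies per(A^(k+1)) = per(A^(k)) · ∏_{i∈[n]} r_i(A^(k))^{-1}. Symmetrically, for any even k ≥ 0, ∏_{j∈[n]} c_j(A^(k)) ≤ 1 and per(A^(k+1)) = per(A^(k)) · ∏_{j∈[n]} c_j(A^(k))^{-1}. In particular the permanent is nondecreasing along the iteration. -/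
open Finset Matrix

/-- The permanent of a square matrix. -/
def perm {n : ℕ} (A : Matrix (Fin n) (Fin n) ℝ) : ℝ :=
  ∑ σ : Equiv.Perm (Fin n), ∏ i, A i (σ i)

/-- AM-GM: positive reals summing to `n` have product at most `1`. -/
lemma amgm_aux {n : ℕ} (f : Fin n → ℝ) (hf : ∀ i, 0 < f i)
    (hsum : ∑ i, f i = n) : ∏ i, f i ≤ 1 := by
  rcases Nat.eq_zero_or_pos n with h | h
  · subst h; simp
  have hn : (0:ℝ) < n := by exact_mod_cast h
  have key := Real.geom_mean_le_arith_mean_weighted Finset.univ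
      (fun _ : Fin n => (n : ℝ)⁻¹) f
      (fun i _ => by positivity)
      (by simp [Finset.card_univ]; field_simp)
      (fun i _ => (hf i).le)
  have hsum' : ∑ i, (n:ℝ)⁻¹ * f i = 1 := by
    rw [← Finset.mul_sum, hsum]; field_simp
  rw [hsum'] at key
  have hpow : (∏ i, f i ^ ((n:ℝ)⁻¹)) ^ (n:ℕ) ≤ 1 :=
    pow_le_one₀ (Finset.prod_nonneg fun i _ => Real.rpow_nonneg (hf i).le _) key
  calc ∏ i, f i = (∏ i, f i ^ ((n:ℝ)⁻¹)) ^ (n:ℕ) := by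
        rw [← Finset.prod_pow]
        refine Finset.prod_congr rfl fun i _ => ?_
        rw [← Real.rpow_natCast (f i ^ ((n:ℝ)⁻¹)) n, ← Real.rpow_mul (hf i).le,
          inv_mul_cancel₀ hn.ne', Real.rpow_one]
    _ ≤ 1 := hpow

lemma perm_row_div {n : ℕ} (M B : Matrix (Fin n) (Fin n) ℝ) (d : Fin n → ℝ)
    (h : ∀ i j, B i j = M i j / d i) :
    perm B = perm M * ∏ i, (d i)⁻¹ := by
  unfold perm
  rw [Finset.sum_mul]
  refine Finset.sum_congr rfl fun σ _ => ?_
  rw [← Finset.prod_mul_distrib]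
  exact Finset.prod_congr rfl fun i _ => by rw [h i (σ i), div_eq_mul_inv]

lemma perm_col_div {n : ℕ} (M B : Matrix (Fin n) (Fin n) ℝ) (d : Fin n → ℝ)
    (h : ∀ i j, B i j = M i j / d j) :
    perm B = perm M * ∏ j, (d j)⁻¹ := by
  unfold perm
  rw [Finset.sum_mul]
  refine Finset.sum_congr rfl fun σ _ => ?_
  have hco : ∏ j, (d j)⁻¹ = ∏ i, (d (σ i))⁻¹ := (Equiv.prod_comp σ fun j => (d j)⁻¹).symm
  rw [hco, ← Finset.prod_mul_distrib]
  exact Finset.prod_congr rfl fun i _ => by rw [h i (σ i), div_eq_mul_inv]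

lemma perm_nonneg {n : ℕ} (M : Matrix (Fin n) (Fin n) ℝ) (h : ∀ i j, 0 ≤ M i j) :
    0 ≤ perm M :=
  Finset.sum_nonneg fun σ _ => Finset.prod_nonneg fun i _ => h i (σ i)

theorem stmt2 (n : ℕ) (A : Matrix (Fin n) (Fin n) ℝ)
    (hA : ∀ i j, 0 ≤ A i j) (hA0 : A ≠ 0)
    (S : ℕ → Matrix (Fin n) (Fin n) ℝ)
    (hr0 : ∀ i, 0 < rsum A i)
    (hrow : ∀ k i, 0 < rsum (S k) i) (hcol : ∀ k j, 0 < csum (S k) j)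
    (h0 : ∀ i j, S 0 i j = A i j / rsum A i)
    (hodd : ∀ k, Odd k → ∀ i j, S k i j = S (k - 1) i j / csum (S (k - 1)) j)
    (heven : ∀ k, 0 < k → Even k → ∀ i j, S k i j = S (k - 1) i j / rsum (S (k - 1)) i) :
    (∀ k, Odd k →
      (∏ i, rsum (S k) i) ≤ 1 ∧
      perm (S (k + 1)) = perm (S k) * ∏ i, (rsum (S k) i)⁻¹) ∧
    (∀ k, Even k →
      (∏ j, csum (S k) j) ≤ 1 ∧
      perm (S (k + 1)) = perm (S k) * ∏ j, (csum (S k) j)⁻¹) ∧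
    (∀ k, perm (S k) ≤ perm (S (k + 1))) := by
  -- entries are nonnegative
  have hnn : ∀ k i j, 0 ≤ S k i j := by
    intro k
    induction k with
    | zero => intro i j; rw [h0 i j]; exact div_nonneg (hA i j) (hr0 i).le
    | succ m ih =>
      intro i j
      rcases Nat.even_or_odd (m + 1) with he | ho
      · rw [heven (m + 1) (Nat.succ_pos m) he i j, Nat.add_sub_cancel]
        exact div_nonneg (ih i j) (hrow m i).le
      · rw [hodd (m + 1) ho i j, Nat.add_sub_cancel]
        exact div_nonneg (ih i j) (hcol m j).le
  -- row sums are 1 at even steps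
  have hrs1 : ∀ k, Even k → ∀ i, rsum (S k) i = 1 := by
    intro k hk i
    rcases Nat.eq_zero_or_pos k with h | h
    · subst h
      unfold rsum
      rw [Finset.sum_congr rfl fun j _ => h0 i j, ← Finset.sum_div]
      exact div_self (hr0 i).ne'
    · unfold rsum
      rw [Finset.sum_congr rfl fun j _ => heven k h hk i j, ← Finset.sum_div]
      exact div_self (hrow (k - 1) i).ne'
  -- column sums are 1 at odd steps
  have hcs1 : ∀ k, Odd k → ∀ j, csum (S k) j = 1 := by
    intro k hk j
    unfold csum
    rw [Finset.sum_congr rfl fun i _ => hodd k hk i j, ← Finset.sum_div]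
    exact div_self (hcol (k - 1) j).ne'
  -- the odd part
  have Hodd : ∀ k, Odd k →
      (∏ i, rsum (S k) i) ≤ 1 ∧
      perm (S (k + 1)) = perm (S k) * ∏ i, (rsum (S k) i)⁻¹ := by
    intro k hk
    constructor
    · refine amgm_aux _ (hrow k) ?_
      have : ∑ i, rsum (S k) i = ∑ j, csum (S k) j := by
        unfold rsum csum; rw [Finset.sum_comm]
      rw [this, Finset.sum_congr rfl fun j _ => hcs1 k hk j]
      simp
    · refine perm_row_div (S k) (S (k + 1)) _ fun i j => ?_
      have he : Even (k + 1) := Odd.add_one hk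
      rw [heven (k + 1) (Nat.succ_pos k) he i j, Nat.add_sub_cancel]
  -- the even part
  have Heven : ∀ k, Even k →
      (∏ j, csum (S k) j) ≤ 1 ∧
      perm (S (k + 1)) = perm (S k) * ∏ j, (csum (S k) j)⁻¹ := by
    intro k hk
    constructor
    · refine amgm_aux _ (hcol k) ?_
      have : ∑ j, csum (S k) j = ∑ i, rsum (S k) i := by
        unfold rsum csum; rw [Finset.sum_comm]
      rw [this, Finset.sum_congr rfl fun i _ => hrs1 k hk i]
      simp
    · refine perm_col_div (S k) (S (k + 1)) _ fun i j => ?_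
      have ho : Odd (k + 1) := Even.add_one hk
      rw [hodd (k + 1) ho i j, Nat.add_sub_cancel]
  refine ⟨Hodd, Heven, ?_⟩
  intro k
  have hp0 : 0 ≤ perm (S k) := perm_nonneg _ (hnn k)
  rcases Nat.even_or_odd k with he | ho
  · obtain ⟨h1, h2⟩ := Heven k he
    rw [h2, Finset.prod_inv_distrib]
    refine le_mul_of_one_le_right hp0 ?_
    rw [le_inv_comm₀ one_pos (Finset.prod_pos fun j _ => hcol k j)]
    simpa using h1
  · obtain ⟨h1, h2⟩ := Hodd k ho
    rw [h2, Finset.prod_inv_distrib]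
    refine le_mul_of_one_le_right hp0 ?_
    rw [le_inv_comm₀ one_pos (Finset.prod_pos fun i _ => hrow k i)]
    simpa using h1
end

section
/- Let u ∈ ℤ_{>0}^m, v ∈ ℤ_{>0}^n with ‖u‖₁ = ‖v‖₁ = N, and let B be a nonzero m×n nonnegative matrix. Define the expanded N×N matrix C = G(B,u,v) by: for i ∈ [m], j ∈ [n], and indices i' in the block S_i of size u_i and j' in the block T_j of size v_j, C_{i',j'} = B_{ij}/(u_i v_j). Let A^(t) be the t-th Sinkhorn–Knopp iterate on input (C, (1,1)) and B^(t) the t-th iterate on input (B, (u,v)) (row steps scale row i to sum u_i, column steps scale column j to sum v_j). Then for every t ≥ 0: (i) within each block S_i × T_j all entries of A^(t) are equal; (ii) B^(t)_{ij} = Σ_{i'∈S_i, j'∈T_j} A^(t)_{i',j'}; and consequently (iii) ‖r(A^(t)) − 1‖₁ + ‖c(A^(t)) − 1‖₁ = ‖r(B^(t)) − u‖₁ + ‖c(B^(t)) − v‖₁. -/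
open Finset Matrix

/-!
If `A = G(M,u,v)`, every row of `A` in the block `S i` has sum `r_i(M) / u_i`, and every
column in `T j` has sum `c_j(M) / v_j`. So normalising the rows of `A` to `1` rescales the
block `S i × T j` by `u_i / r_i(M)`, which is exactly what normalising row `i` of `M` to `u_i`
does, and `A^(t) = G(B^(t),u,v)` for all `t` by induction (column steps are row steps of the
transposes). All three claims are read off from this invariant; for (iii), the `u_i` rows of
block `S i` contribute `u_i · |r_i(M) / u_i - 1| = |r_i(M) - u_i|`.
-/

namespace Sinkhorn

structure IsBlockPartition {ι α : Type*} [Fintype ι] [Fintype α] [DecidableEq α]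
    (S : ι → Finset α) (u : ι → ℕ) : Prop where
  pairwiseDisjoint : (Set.univ : Set ι).PairwiseDisjoint S
  biUnion_eq_univ : univ.biUnion S = univ
  card_eq : ∀ i, #(S i) = u i

theorem IsBlockPartition.sum_eq {ι α R : Type*} [Fintype ι] [Fintype α] [DecidableEq α]
    [AddCommMonoid R] {S : ι → Finset α} {u : ι → ℕ} (hS : IsBlockPartition S u)
    (f : α → R) :
    ∑ x, f x = ∑ i, ∑ x ∈ S i, f x := by
  rw [← sum_biUnion (hS.pairwiseDisjoint.subset (Set.subset_univ _)), hS.biUnion_eq_univ]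

section ConsecutiveBlocks

variable {m : ℕ}

def consecutiveBlock (u : Fin m → ℕ) (N : ℕ) (i : Fin m) : Finset (Fin N) :=
  {x | ∑ k with k < i, u k ≤ (x : ℕ) ∧ (x : ℕ) < ∑ k with k ≤ i, u k}

theorem sum_le_eq_sum_lt_add (u : Fin m → ℕ) (i : Fin m) :
    ∑ k with k ≤ i, u k = ∑ k with k < i, u k + u i := by
  rw [filter_ge_eq_Iic, filter_gt_eq_Iio, Iic_eq_cons_Iio, sum_cons, add_comm]

theorem sum_le_le_sum_lt (u : Fin m → ℕ) {i j : Fin m} (hij : i < j) :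
    ∑ k with k ≤ i, u k ≤ ∑ k with k < j, u k :=
  sum_le_sum_of_subset fun k hk => by
    simp only [mem_filter, mem_univ, true_and] at hk ⊢
    exact hk.trans_lt hij

theorem card_filter_le_val_lt {N a b : ℕ} (hab : a ≤ b) (hb : b ≤ N) :
    #{x : Fin N | a ≤ (x : ℕ) ∧ (x : ℕ) < b} = b - a := by
  have : ({x : Fin N | a ≤ (x : ℕ) ∧ (x : ℕ) < b} : Finset _) =
      ({x : Fin N | (x : ℕ) < b} : Finset _) \ ({x : Fin N | (x : ℕ) < a} : Finset _) := by
    ext x; simp [and_comm]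
  rw [this, card_sdiff_of_subset, Fin.card_filter_val_lt, Fin.card_filter_val_lt]
  · omega
  · intro x; simp only [mem_filter, mem_univ, true_and]; omega

theorem card_consecutiveBlock {N : ℕ} {u : Fin m → ℕ} (husum : ∑ i, u i = N) (i : Fin m) :
    #(consecutiveBlock u N i) = u i := by
  have hle : ∑ k with k ≤ i, u k ≤ N := husum ▸ sum_le_sum_of_subset (filter_subset _ _)
  have hsucc := sum_le_eq_sum_lt_add u i
  rw [consecutiveBlock, card_filter_le_val_lt (by omega) hle]
  omega

theorem isBlockPartition_consecutiveBlock {N : ℕ} {u : Fin m → ℕ} (husum : ∑ i, u i = N) :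
    IsBlockPartition (consecutiveBlock u N) u := by
  have hdisj_of_lt : ∀ i j, i < j →
      Disjoint (consecutiveBlock u N i) (consecutiveBlock u N j) := fun i j hij =>
    disjoint_left.mpr fun x hxi hxj => by
      simp only [consecutiveBlock, mem_filter, mem_univ, true_and] at hxi hxj
      have := sum_le_le_sum_lt u hij
      omega
  have hdisj : (Set.univ : Set (Fin m)).PairwiseDisjoint (consecutiveBlock u N) := by
    intro i _ j _ hij
    rcases hij.lt_or_gt with h | h
    exacts [hdisj_of_lt i j h, (hdisj_of_lt j i h).symm]
  refine ⟨hdisj, eq_univ_of_card _ ?_, card_consecutiveBlock husum⟩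
  rw [card_biUnion (hdisj.subset (Set.subset_univ _)), Fintype.card_fin]
  exact (sum_congr rfl fun i _ => card_consecutiveBlock husum i).trans husum

end ConsecutiveBlocks

section BlockExpansion

variable {m n p q : ℕ} {S : Fin m → Finset (Fin p)} {T : Fin n → Finset (Fin q)}
  {u : Fin m → ℕ} {v : Fin n → ℕ} {M : Matrix (Fin m) (Fin n) ℝ}
  {A : Matrix (Fin p) (Fin q) ℝ}

/-- `A = G(M,u,v)` in the paper's notation, for arbitrary blocks `S i`, `T j`. -/
def IsBlockExpansion (S : Fin m → Finset (Fin p)) (T : Fin n → Finset (Fin q))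
    (u : Fin m → ℕ) (v : Fin n → ℕ) (M : Matrix (Fin m) (Fin n) ℝ)
    (A : Matrix (Fin p) (Fin q) ℝ) : Prop :=
  ∀ i j, ∀ x ∈ S i, ∀ y ∈ T j, A x y = M i j / ((u i : ℝ) * (v j : ℝ))

theorem IsBlockExpansion.transpose (h : IsBlockExpansion S T u v M A) :
    IsBlockExpansion T S v u Mᵀ Aᵀ := fun j i y hy x hx => by
  rw [transpose_apply, transpose_apply, h i j x hx y hy, mul_comm]

theorem IsBlockExpansion.apply_eq_apply (h : IsBlockExpansion S T u v M A) :
    ∀ i j, ∀ x ∈ S i, ∀ y ∈ T j, ∀ x' ∈ S i, ∀ y' ∈ T j, A x y = A x' y' :=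
  fun i j x hx y hy x' hx' y' hy' => by rw [h i j x hx y hy, h i j x' hx' y' hy']

theorem IsBlockExpansion.sum_sum_eq (h : IsBlockExpansion S T u v M A)
    (hS : IsBlockPartition S u) (hT : IsBlockPartition T v)
    (hu : ∀ i, 0 < u i) (hv : ∀ j, 0 < v j) (i : Fin m) (j : Fin n) :
    ∑ x ∈ S i, ∑ y ∈ T j, A x y = M i j := by
  rw [sum_congr rfl fun x hx => sum_congr rfl fun y hy => h i j x hx y hy]
  simp only [sum_const, hS.card_eq, hT.card_eq, nsmul_eq_mul]
  have := (hu i).ne'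
  have := (hv j).ne'
  field_simp

theorem IsBlockExpansion.rsum_eq (h : IsBlockExpansion S T u v M A)
    (hT : IsBlockPartition T v) (hv : ∀ j, 0 < v j) {i : Fin m} {x : Fin p} (hx : x ∈ S i) :
    rsum A x = rsum M i / u i := by
  calc rsum A x = ∑ j, ∑ y ∈ T j, A x y := hT.sum_eq _
    _ = ∑ j, M i j / u i := sum_congr rfl fun j _ => by
        have := (hv j).ne'
        rw [sum_congr rfl fun y hy => h i j x hx y hy, sum_const, hT.card_eq, nsmul_eq_mul]
        field_simp
    _ = rsum M i / u i := (sum_div _ _ _).symm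

theorem IsBlockExpansion.rowNormalize (h : IsBlockExpansion S T u v M A)
    (hT : IsBlockPartition T v) (hv : ∀ j, 0 < v j) :
    IsBlockExpansion S T u v (fun i j => u i * M i j / rsum M i)
      (fun x y => A x y / rsum A x) := fun i j x hx y hy => by
  dsimp only
  rw [h i j x hx y hy, h.rsum_eq hT hv hx, div_div_eq_mul_div]
  ring

theorem IsBlockExpansion.colNormalize (h : IsBlockExpansion S T u v M A)
    (hS : IsBlockPartition S u) (hu : ∀ i, 0 < u i) :
    IsBlockExpansion S T u v (fun i j => v j * M i j / csum M j)
      (fun x y => A x y / csum A y) :=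
  (h.transpose.rowNormalize hS hu).transpose

theorem IsBlockExpansion.sum_abs_rsum_sub_one (h : IsBlockExpansion S T u v M A)
    (hS : IsBlockPartition S u) (hT : IsBlockPartition T v)
    (hu : ∀ i, 0 < u i) (hv : ∀ j, 0 < v j) :
    ∑ x, |rsum A x - 1| = ∑ i, |rsum M i - u i| := by
  rw [hS.sum_eq]
  refine sum_congr rfl fun i _ => ?_
  have hui : (0 : ℝ) < u i := by exact_mod_cast hu i
  calc ∑ x ∈ S i, |rsum A x - 1| = u i * |rsum M i / u i - 1| := by
        rw [sum_congr rfl fun x hx => by rw [h.rsum_eq hT hv hx], sum_const, hS.card_eq,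
          nsmul_eq_mul]
    _ = |u i * (rsum M i / u i - 1)| := by rw [abs_mul, abs_of_pos hui]
    _ = |rsum M i - u i| := by rw [mul_sub, mul_div_cancel₀ _ hui.ne', mul_one]

theorem IsBlockExpansion.sum_abs_csum_sub_one (h : IsBlockExpansion S T u v M A)
    (hS : IsBlockPartition S u) (hT : IsBlockPartition T v)
    (hu : ∀ i, 0 < u i) (hv : ∀ j, 0 < v j) :
    ∑ y, |csum A y - 1| = ∑ j, |csum M j - v j| :=
  h.transpose.sum_abs_rsum_sub_one hT hS hv hu

end BlockExpansion

end Sinkhorn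

open Sinkhorn

theorem stmt4_general (m n N : ℕ) (u : Fin m → ℕ) (v : Fin n → ℕ)
    (hu : ∀ i, 0 < u i) (hv : ∀ j, 0 < v j)
    (husum : ∑ i, u i = N) (hvsum : ∑ j, v j = N)
    (B : Matrix (Fin m) (Fin n) ℝ)
    -- the consecutive index blocks `S_i ⊆ [N]` of sizes `u i` and `T_j ⊆ [N]` of sizes `v j`
    (Sblk : Fin m → Finset (Fin N)) (Tblk : Fin n → Finset (Fin N))
    (hSblk : ∀ i, Sblk i = Finset.univ.filter (fun i' : Fin N =>
      (∑ k ∈ Finset.univ.filter (fun k => k < i), u k) ≤ (i' : ℕ) ∧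
      (i' : ℕ) < ∑ k ∈ Finset.univ.filter (fun k => k ≤ i), u k))
    (hTblk : ∀ j, Tblk j = Finset.univ.filter (fun j' : Fin N =>
      (∑ k ∈ Finset.univ.filter (fun k => k < j), v k) ≤ (j' : ℕ) ∧
      (j' : ℕ) < ∑ k ∈ Finset.univ.filter (fun k => k ≤ j), v k))
    -- the expanded matrix `C = G(B,u,v)`
    (C : Matrix (Fin N) (Fin N) ℝ)
    (hC : ∀ i j, ∀ i' ∈ Sblk i, ∀ j' ∈ Tblk j, C i' j' = B i j / ((u i : ℝ) * (v j : ℝ)))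
    -- the Sinkhorn–Knopp iterates `SA` on input `(C,(1,1))`
    (SA : ℕ → Matrix (Fin N) (Fin N) ℝ)
    (hSA0 : ∀ i j, SA 0 i j = C i j / rsum C i)
    (hSAodd : ∀ k, Odd k → ∀ i j, SA k i j = SA (k - 1) i j / csum (SA (k - 1)) j)
    (hSAeven : ∀ k, 0 < k → Even k → ∀ i j,
      SA k i j = SA (k - 1) i j / rsum (SA (k - 1)) i)
    -- the Sinkhorn–Knopp iterates `SB` on input `(B,(u,v))`
    (SB : ℕ → Matrix (Fin m) (Fin n) ℝ)
    (hSB0 : ∀ i j, SB 0 i j = (u i : ℝ) * B i j / rsum B i)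
    (hSBodd : ∀ k, Odd k → ∀ i j, SB k i j = (v j : ℝ) * SB (k - 1) i j / csum (SB (k - 1)) j)
    (hSBeven : ∀ k, 0 < k → Even k → ∀ i j,
      SB k i j = (u i : ℝ) * SB (k - 1) i j / rsum (SB (k - 1)) i) :
    ∀ t : ℕ,
      (∀ i j, ∀ i' ∈ Sblk i, ∀ j' ∈ Tblk j, ∀ i'' ∈ Sblk i, ∀ j'' ∈ Tblk j,
        SA t i' j' = SA t i'' j'') ∧
      (∀ i j, SB t i j = ∑ i' ∈ Sblk i, ∑ j' ∈ Tblk j, SA t i' j') ∧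
      ((∑ i, |rsum (SA t) i - 1|) + (∑ j, |csum (SA t) j - 1|) =
        (∑ i, |rsum (SB t) i - (u i : ℝ)|) + (∑ j, |csum (SB t) j - (v j : ℝ)|)) := by
  have hS : IsBlockPartition Sblk u := funext hSblk ▸ isBlockPartition_consecutiveBlock husum
  have hT : IsBlockPartition Tblk v := funext hTblk ▸ isBlockPartition_consecutiveBlock hvsum
  have hexp : ∀ t, IsBlockExpansion Sblk Tblk u v (SB t) (SA t) := by
    intro t
    induction t with
    | zero =>
      rw [show SA 0 = _ from funext₂ hSA0, show SB 0 = _ from funext₂ hSB0]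
      exact IsBlockExpansion.rowNormalize hC hT hv
    | succ t ih =>
      rcases Nat.even_or_odd (t + 1) with he | ho
      · rw [show SA (t + 1) = _ from funext₂ (hSAeven _ t.succ_pos he),
          show SB (t + 1) = _ from funext₂ (hSBeven _ t.succ_pos he)]
        exact ih.rowNormalize hT hv
      · rw [show SA (t + 1) = _ from funext₂ (hSAodd _ ho),
          show SB (t + 1) = _ from funext₂ (hSBodd _ ho)]
        exact ih.colNormalize hS hu
  intro t
  refine ⟨(hexp t).apply_eq_apply, fun i j => ((hexp t).sum_sum_eq hS hT hu hv i j).symm, ?_⟩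
  rw [(hexp t).sum_abs_rsum_sub_one hS hT hu hv, (hexp t).sum_abs_csum_sub_one hS hT hu hv]

theorem stmt4 (m n N : ℕ) (u : Fin m → ℕ) (v : Fin n → ℕ)
    (hu : ∀ i, 0 < u i) (hv : ∀ j, 0 < v j)
    (husum : ∑ i, u i = N) (hvsum : ∑ j, v j = N)
    (B : Matrix (Fin m) (Fin n) ℝ) (hB : ∀ i j, 0 ≤ B i j) (hB0 : B ≠ 0)
    -- the consecutive index blocks `S_i ⊆ [N]` of sizes `u i` and `T_j ⊆ [N]` of sizes `v j`
    (Sblk : Fin m → Finset (Fin N)) (Tblk : Fin n → Finset (Fin N))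
    (hSblk : ∀ i, Sblk i = Finset.univ.filter (fun i' : Fin N =>
      (∑ k ∈ Finset.univ.filter (fun k => k < i), u k) ≤ (i' : ℕ) ∧
      (i' : ℕ) < ∑ k ∈ Finset.univ.filter (fun k => k ≤ i), u k))
    (hTblk : ∀ j, Tblk j = Finset.univ.filter (fun j' : Fin N =>
      (∑ k ∈ Finset.univ.filter (fun k => k < j), v k) ≤ (j' : ℕ) ∧
      (j' : ℕ) < ∑ k ∈ Finset.univ.filter (fun k => k ≤ j), v k))
    -- the expanded matrix `C = G(B,u,v)`
    (C : Matrix (Fin N) (Fin N) ℝ)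
    (hC : ∀ i j, ∀ i' ∈ Sblk i, ∀ j' ∈ Tblk j, C i' j' = B i j / ((u i : ℝ) * (v j : ℝ)))
    -- the Sinkhorn–Knopp iterates `SA` on input `(C,(1,1))`
    (SA : ℕ → Matrix (Fin N) (Fin N) ℝ)
    (hCr : ∀ i, 0 < rsum C i)
    (hSAr : ∀ k i, 0 < rsum (SA k) i) (hSAc : ∀ k j, 0 < csum (SA k) j)
    (hSA0 : ∀ i j, SA 0 i j = C i j / rsum C i)
    (hSAodd : ∀ k, Odd k → ∀ i j, SA k i j = SA (k - 1) i j / csum (SA (k - 1)) j)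
    (hSAeven : ∀ k, 0 < k → Even k → ∀ i j,
      SA k i j = SA (k - 1) i j / rsum (SA (k - 1)) i)
    -- the Sinkhorn–Knopp iterates `SB` on input `(B,(u,v))`
    (SB : ℕ → Matrix (Fin m) (Fin n) ℝ)
    (hBr : ∀ i, 0 < rsum B i)
    (hSBr : ∀ k i, 0 < rsum (SB k) i) (hSBc : ∀ k j, 0 < csum (SB k) j)
    (hSB0 : ∀ i j, SB 0 i j = (u i : ℝ) * B i j / rsum B i)
    (hSBodd : ∀ k, Odd k → ∀ i j, SB k i j = (v j : ℝ) * SB (k - 1) i j / csum (SB (k - 1)) j)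
    (hSBeven : ∀ k, 0 < k → Even k → ∀ i j,
      SB k i j = (u i : ℝ) * SB (k - 1) i j / rsum (SB (k - 1)) i) :
    ∀ t : ℕ,
      (∀ i j, ∀ i' ∈ Sblk i, ∀ j' ∈ Tblk j, ∀ i'' ∈ Sblk i, ∀ j'' ∈ Tblk j,
        SA t i' j' = SA t i'' j'') ∧
      (∀ i j, SB t i j = ∑ i' ∈ Sblk i, ∑ j' ∈ Tblk j, SA t i' j') ∧
      ((∑ i, |rsum (SA t) i - 1|) + (∑ j, |csum (SA t) j - 1|) =
        (∑ i, |rsum (SB t) i - (u i : ℝ)|) + (∑ j, |csum (SB t) j - (v j : ℝ)|)) :=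
  stmt4_general m n N u v hu hv husum hvsum B Sblk Tblk hSblk hTblk C hC SA hSA0 hSAodd hSAeven SB
    hSB0 hSBodd hSBeven
end

section
/- Let γ, ρ ∈ (0,1], γ' ∈ (1−γ, 1], and let A be an n×n (γ,γ',ρ)-dense matrix with respect to (1,1). Let X, Y be positive diagonal matrices such that B = XAY is standardized (all row sums equal 1, or all column sums equal 1), has entries in [0,1], and satisfies γ + γ' − 1 − α(B) > 0, where α(B) = (1/n)·Σ_j |c_j(B) − 1| when rows are normalized (resp. (1/n)·Σ_i |r_i(B) − 1| when columns are normalized). Then, in the row-normalized case, for all i,j: B_{ij} ≤ c_j(B) / (ρ²(γ + γ' − 1 − α(B))·n); in the column-normalized case, B_{ij} ≤ r_i(B) / (ρ²(γ + γ' − 1 − α(B))·n). -/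
open Finset Matrix

/-- `A` is `(γ,γ',ρ)`-dense with respect to weight vectors `(u,v)`. -/
def IsDense {m n : ℕ} (A : Matrix (Fin m) (Fin n) ℝ)
    (u : Fin m → ℝ) (v : Fin n → ℝ) (γ γ' ρ : ℝ) : Prop :=
  (γ = ⨅ i : Fin m, ∑ j, (v j / ∑ j', v j') *
      (if ρ * (⨆ i' : Fin m, ⨆ j' : Fin n, A i' j') < A i j then (1 : ℝ) else 0)) ∧
  (γ' = ⨅ j : Fin n, ∑ i, (u i / ∑ i', u i') *
      (if ρ * (⨆ i' : Fin m, ⨆ j' : Fin n, A i' j') < A i j then (1 : ℝ) else 0))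

lemma iSup_swap' {n : ℕ} (hn : 0 < n) (f : Fin n → Fin n → ℝ) :
    (⨆ i, ⨆ j, f i j) = ⨆ i, ⨆ j, f j i := by
  have : Nonempty (Fin n) := ⟨⟨0, hn⟩⟩
  have h : ∀ g : Fin n → Fin n → ℝ, (⨆ i, ⨆ j, g i j) ≤ ⨆ i, ⨆ j, g j i := by
    intro g
    apply ciSup_le; intro i; apply ciSup_le; intro j
    calc g i j ≤ ⨆ i', g i' j := le_ciSup (f := fun a => g a j) ((Set.finite_range _).bddAbove) i
      _ ≤ ⨆ b, ⨆ a, g a b :=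
        le_ciSup (f := fun b => ⨆ a, g a b) ((Set.finite_range _).bddAbove) j
  exact le_antisymm (h f) (h fun a b => f b a)

lemma key (n : ℕ) (hn : 0 < n) (γ γ' ρ : ℝ)
    (hγ : γ ∈ Set.Ioc (0 : ℝ) 1) (hγ' : γ' ∈ Set.Ioc (1 - γ) 1)
    (hρ : ρ ∈ Set.Ioc (0 : ℝ) 1)
    (A : Matrix (Fin n) (Fin n) ℝ)
    (hdense : IsDense A (fun _ => (1 : ℝ)) (fun _ => (1 : ℝ)) γ γ' ρ)
    (X Y : Fin n → ℝ) (hX : ∀ i, 0 < X i) (hY : ∀ j, 0 < Y j)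
    (B : Matrix (Fin n) (Fin n) ℝ)
    (hXAY : ∀ i j, B i j = X i * A i j * Y j)
    (hBrange : ∀ i j, B i j ∈ Set.Icc (0 : ℝ) 1)
    (hrow : ∀ i, rsum B i = 1)
    (hpos : 0 < γ + γ' - 1 - (1 / n) * ∑ j', |csum B j' - 1|)
    (i j : Fin n) :
    B i j ≤ csum B j /
      (ρ ^ 2 * (γ + γ' - 1 - (1 / n) * ∑ j', |csum B j' - 1|) * n) := by
  have hn' : (0 : ℝ) < n := by exact_mod_cast hn
  have : Nonempty (Fin n) := ⟨⟨0, hn⟩⟩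
  set α := (1 / (n:ℝ)) * ∑ j', |csum B j' - 1| with hαdef
  set δ := γ + γ' - 1 - α with hδdef
  clear_value δ
  set t := ⨆ i' : Fin n, ⨆ j' : Fin n, A i' j' with htdef
  -- A is nonnegative
  have hAnn : ∀ k l, 0 ≤ A k l := by
    intro k l
    have h := (hBrange k l).1
    rw [hXAY] at h
    nlinarith [hX k, hY l, mul_pos (hX k) (hY l)]
  have hAt : ∀ k l, A k l ≤ t := by
    intro k l
    rw [htdef]
    calc A k l ≤ ⨆ l', A k l' := le_ciSup ((Set.finite_range _).bddAbove) l
      _ ≤ _ := le_ciSup (f := fun k' => ⨆ l', A k' l') ((Set.finite_range _).bddAbove) k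
  have ht0 : 0 < t := by
    obtain ⟨k, hk⟩ : ∃ k, 0 < B ⟨0, hn⟩ k := by
      by_contra h
      push_neg at h
      have h2 : rsum B ⟨0, hn⟩ ≤ 0 := Finset.sum_nonpos (fun k _ => h k)
      rw [hrow] at h2; linarith
    have hA : 0 < A ⟨0, hn⟩ k := by
      rw [hXAY] at hk
      nlinarith [hX ⟨0, hn⟩, hY k, hAnn ⟨0, hn⟩ k, mul_pos (hX ⟨0, hn⟩) (hY k)]
    exact lt_of_lt_of_le hA (hAt _ k)
  -- density bounds
  have hrowdense : ∀ i' : Fin n, γ * n ≤ ∑ k, (if ρ * t < A i' k then (1:ℝ) else 0) := by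
    intro i'
    have hle : γ ≤ ∑ k, ((1:ℝ) / ∑ _k' : Fin n, (1:ℝ)) *
        (if ρ * t < A i' k then (1:ℝ) else 0) := by
      conv_lhs => rw [hdense.1]
      exact ciInf_le ((Set.finite_range _).bddBelow) i'
    simp only [Finset.sum_const, Finset.card_univ, Fintype.card_fin, nsmul_eq_mul, mul_one] at hle
    rw [← Finset.mul_sum] at hle
    have h2 := mul_le_mul_of_nonneg_right hle hn'.le
    have h3 : (1 / (n:ℝ) * ∑ k, (if ρ * t < A i' k then (1:ℝ) else 0)) * n
        = ∑ k, (if ρ * t < A i' k then (1:ℝ) else 0) := by field_simp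
    linarith
  have hcoldense : ∀ j' : Fin n, γ' * n ≤ ∑ k, (if ρ * t < A k j' then (1:ℝ) else 0) := by
    intro j'
    have hle : γ' ≤ ∑ k, ((1:ℝ) / ∑ _k' : Fin n, (1:ℝ)) *
        (if ρ * t < A k j' then (1:ℝ) else 0) := by
      conv_lhs => rw [hdense.2]
      exact ciInf_le ((Set.finite_range _).bddBelow) j'
    simp only [Finset.sum_const, Finset.card_univ, Fintype.card_fin, nsmul_eq_mul, mul_one] at hle
    rw [← Finset.mul_sum] at hle
    have h2 := mul_le_mul_of_nonneg_right hle hn'.le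
    have h3 : (1 / (n:ℝ) * ∑ k, (if ρ * t < A k j' then (1:ℝ) else 0)) * n
        = ∑ k, (if ρ * t < A k j' then (1:ℝ) else 0) := by field_simp
    linarith
  clear_value t
  set SY := ∑ k, (if ρ * t < A i k then Y k else 0) with hSYdef
  set TX := ∑ k, (if ρ * t < A k j then X k else 0) with hTXdef
  have hSYnn : 0 ≤ SY := by
    rw [hSYdef]
    exact Finset.sum_nonneg (fun k _ => by split <;> [exact (hY k).le; rfl])
  have hTXnn : 0 ≤ TX := by
    rw [hTXdef]
    exact Finset.sum_nonneg (fun k _ => by split <;> [exact (hX k).le; rfl])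
  -- step 1
  have h1 : X i * (ρ * t) * SY ≤ 1 := by
    have he : X i * (ρ * t) * SY = ∑ k, (if ρ * t < A i k then X i * (ρ * t) * Y k else 0) := by
      rw [hSYdef, Finset.mul_sum]
      exact Finset.sum_congr rfl (fun k _ => by split <;> ring)
    rw [he, ← hrow i]
    unfold rsum
    apply Finset.sum_le_sum
    intro k _
    rw [hXAY]
    split
    · next h => nlinarith [hX i, hY k, mul_pos (hX i) (hY k)]
    · exact mul_nonneg (mul_nonneg (hX i).le (hAnn i k)) (hY k).le
  -- step 2
  have h2 : (ρ * t) * Y j * TX ≤ csum B j := by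
    have he : (ρ * t) * Y j * TX = ∑ k, (if ρ * t < A k j then (ρ * t) * Y j * X k else 0) := by
      rw [hTXdef, Finset.mul_sum]
      exact Finset.sum_congr rfl (fun k _ => by split <;> ring)
    rw [he]
    unfold csum
    apply Finset.sum_le_sum
    intro k _
    rw [hXAY]
    split
    · next h => nlinarith [hX k, hY j, mul_pos (hX k) (hY j)]
    · exact mul_nonneg (mul_nonneg (hX k).le (hAnn k j)) (hY j).le
  -- step 3 : δ * n ≤ t * TX * SY
  have hg01 : ∀ k, 0 ≤ (∑ l, (if ρ * t < A i l then B k l else 0)) ∧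
      (∑ l, (if ρ * t < A i l then B k l else 0)) ≤ 1 := by
    intro k
    constructor
    · exact Finset.sum_nonneg (fun l _ => by split <;> [exact (hBrange k l).1; rfl])
    · rw [← hrow k]
      unfold rsum
      exact Finset.sum_le_sum (fun l _ => by split <;> [rfl; exact (hBrange k l).1])
  have hD : δ * n ≤ t * TX * SY := by
    have hup : ∑ k, (if ρ * t < A k j then (∑ l, (if ρ * t < A i l then B k l else 0)) else 0)
        ≤ TX * (t * SY) := by
      rw [hTXdef, Finset.sum_mul]
      apply Finset.sum_le_sum
      intro k _
      by_cases hk : ρ * t < A k j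
      · simp only [if_pos hk]
        have heq : X k * (t * SY) = ∑ l, (if ρ * t < A i l then X k * t * Y l else 0) := by
          rw [hSYdef, Finset.mul_sum, Finset.mul_sum]
          exact Finset.sum_congr rfl (fun l _ => by split <;> ring)
        rw [heq]
        apply Finset.sum_le_sum
        intro l _
        split
        · rw [hXAY]
          nlinarith [hX k, hY l, hAt k l, mul_pos (hX k) (hY l)]
        · rfl
      · simp [hk, (hg01 k).1]
    have hsplit : ∀ k, (∑ l, (if ρ * t < A i l then B k l else 0))
          - (1 - (if ρ * t < A k j then (1:ℝ) else 0))
        ≤ (if ρ * t < A k j then (∑ l, (if ρ * t < A i l then B k l else 0)) else 0) := by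
      intro k
      have hk1 := (hg01 k).1
      have hk2 := (hg01 k).2
      split <;> simp <;> linarith
    have hsum := Finset.sum_le_sum (fun k (_ : k ∈ Finset.univ) => hsplit k)
    have hswap : ∑ k : Fin n, (∑ l, (if ρ * t < A i l then B k l else 0))
        = ∑ l, (if ρ * t < A i l then csum B l else 0) := by
      rw [Finset.sum_comm]
      refine Finset.sum_congr rfl (fun l _ => ?_)
      unfold csum
      split
      · rfl
      · exact Finset.sum_const_zero
    have hcsum : ∑ l, (if ρ * t < A i l then (1:ℝ) else 0) - ∑ l, |csum B l - 1|
        ≤ ∑ l, (if ρ * t < A i l then csum B l else 0) := by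
      rw [← Finset.sum_sub_distrib]
      apply Finset.sum_le_sum
      intro l _
      have h0 := abs_nonneg (csum B l - 1)
      have hab := le_abs_self (1 - csum B l)
      rw [abs_sub_comm] at hab
      split <;> linarith
    have htot : ∑ k : Fin n, ((∑ l, (if ρ * t < A i l then B k l else 0))
          - (1 - (if ρ * t < A k j then (1:ℝ) else 0)))
        = (∑ l, (if ρ * t < A i l then csum B l else 0))
          - n + ∑ k, (if ρ * t < A k j then (1:ℝ) else 0) := by
      rw [Finset.sum_sub_distrib, Finset.sum_sub_distrib, hswap, Finset.sum_const,
        Finset.card_univ, Fintype.card_fin, nsmul_eq_mul, mul_one]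
      ring
    have hαn : (∑ l, |csum B l - 1|) = α * n := by
      rw [hαdef]; field_simp
    have hS := hrowdense i
    have hT := hcoldense j
    have hfin : δ * n ≤ ∑ k, (if ρ * t < A k j then
        (∑ l, (if ρ * t < A i l then B k l else 0)) else 0) := by
      rw [hδdef]
      nlinarith [hsum, htot, hcsum, hS, hT, hαn]
    calc δ * n ≤ TX * (t * SY) := le_trans hfin hup
      _ = t * TX * SY := by ring
  clear_value SY TX
  -- combine
  have hδ0 : 0 < δ := hpos
  have hb0 : 0 ≤ B i j := (hBrange i j).1
  have hBle : B i j ≤ X i * t * Y j := by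
    rw [hXAY]
    nlinarith [hX i, hY j, hAt i j, mul_pos (hX i) (hY j)]
  rw [le_div_iff₀ (mul_pos (mul_pos (pow_pos hρ.1 2) hδ0) hn')]
  have hnn : 0 ≤ ρ ^ 2 * (t * TX * SY) :=
    mul_nonneg (sq_nonneg ρ) (mul_nonneg (mul_nonneg ht0.le hTXnn) hSYnn)
  have h4 := mul_le_mul_of_nonneg_right hBle hnn
  have hstep3 : (X i * (ρ * t) * SY) * ((ρ * t) * Y j * TX) ≤ 1 * csum B j :=
    mul_le_mul h1 h2
      (mul_nonneg (mul_nonneg (mul_nonneg hρ.1.le ht0.le) (hY j).le) hTXnn) zero_le_one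
  calc B i j * (ρ ^ 2 * δ * n) = B i j * ρ ^ 2 * (δ * n) := by ring
    _ ≤ B i j * ρ ^ 2 * (t * TX * SY) :=
        mul_le_mul_of_nonneg_left hD (mul_nonneg hb0 (sq_nonneg ρ))
    _ = B i j * (ρ ^ 2 * (t * TX * SY)) := by ring
    _ ≤ (X i * t * Y j) * (ρ ^ 2 * (t * TX * SY)) := h4
    _ = (X i * (ρ * t) * SY) * ((ρ * t) * Y j * TX) := by ring
    _ ≤ 1 * csum B j := hstep3
    _ = csum B j := one_mul _

theorem stmt6 (n : ℕ) (hn : 0 < n) (γ γ' ρ : ℝ)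
    (hγ : γ ∈ Set.Ioc (0 : ℝ) 1) (hγ' : γ' ∈ Set.Ioc (1 - γ) 1)
    (hρ : ρ ∈ Set.Ioc (0 : ℝ) 1)
    (A : Matrix (Fin n) (Fin n) ℝ)
    (hdense : IsDense A (fun _ => (1 : ℝ)) (fun _ => (1 : ℝ)) γ γ' ρ)
    (X Y : Fin n → ℝ) (hX : ∀ i, 0 < X i) (hY : ∀ j, 0 < Y j)
    (B : Matrix (Fin n) (Fin n) ℝ)
    (hXAY : ∀ i j, B i j = X i * A i j * Y j)
    (hBrange : ∀ i j, B i j ∈ Set.Icc (0 : ℝ) 1)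
    (hstd : (∀ i, rsum B i = 1) ∨ (∀ j, csum B j = 1)) :
    ((∀ i, rsum B i = 1) →
      0 < γ + γ' - 1 - (1 / n) * ∑ j', |csum B j' - 1| →
      ∀ i j, B i j ≤ csum B j /
        (ρ ^ 2 * (γ + γ' - 1 - (1 / n) * ∑ j', |csum B j' - 1|) * n)) ∧
    ((∀ j, csum B j = 1) →
      0 < γ + γ' - 1 - (1 / n) * ∑ i', |rsum B i' - 1| →
      ∀ i j, B i j ≤ rsum B i /
        (ρ ^ 2 * (γ + γ' - 1 - (1 / n) * ∑ i', |rsum B i' - 1|) * n)) := by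
  constructor
  · intro hrow hpos i j
    exact key n hn γ γ' ρ hγ hγ' hρ A hdense X Y hX hY B hXAY hBrange hrow hpos i j
  · intro hcol hpos i j
    have hγ2 : γ' ∈ Set.Ioc (0 : ℝ) 1 := ⟨by linarith [hγ.2, hγ'.1], hγ'.2⟩
    have hγ2' : γ ∈ Set.Ioc (1 - γ') 1 := ⟨by linarith [hγ'.1], hγ.2⟩
    have hsup2 : (⨆ i' : Fin n, ⨆ j' : Fin n, A j' i')
        = ⨆ i' : Fin n, ⨆ j' : Fin n, A i' j' := iSup_swap' hn (fun a b => A b a)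
    have hdt : IsDense Aᵀ (fun _ => (1 : ℝ)) (fun _ => (1 : ℝ)) γ' γ ρ := by
      have h1 := hdense.1
      have h2 := hdense.2
      constructor
      · simp only [Matrix.transpose_apply, hsup2]
        exact h2
      · simp only [Matrix.transpose_apply, hsup2]
        exact h1
    have hBAY : ∀ i' j', Bᵀ i' j' = Y i' * Aᵀ i' j' * X j' := by
      intro i' j'
      simp only [Matrix.transpose_apply, hXAY]
      ring
    have hBrange' : ∀ i' j', Bᵀ i' j' ∈ Set.Icc (0 : ℝ) 1 := fun i' j' => hBrange j' i'
    have hrow' : ∀ i', rsum Bᵀ i' = 1 := by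
      intro i'
      have := hcol i'
      simpa [rsum, csum, Matrix.transpose_apply] using this
    have hcr : ∀ j', csum Bᵀ j' = rsum B j' := by
      intro j'
      simp [csum, rsum, Matrix.transpose_apply]
    have hpos' : 0 < γ' + γ - 1 - (1 / n) * ∑ j', |csum Bᵀ j' - 1| := by
      simp_rw [hcr]
      linarith
    have h := key n hn γ' γ ρ hγ2 hγ2' hρ Aᵀ hdt Y X hY hX Bᵀ hBAY hBrange' hrow' hpos' j i
    simp_rw [hcr, Matrix.transpose_apply] at h
    have heq : ρ ^ 2 * (γ' + γ - 1 - 1 / (n:ℝ) * ∑ j', |rsum B j' - 1|) * n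
        = ρ ^ 2 * (γ + γ' - 1 - 1 / (n:ℝ) * ∑ i', |rsum B i' - 1|) * n := by ring
    rw [heq] at h
    exact h
end

section
/- Let a, b > 0, γ ∈ (0,1], γ' ∈ (1−γ,1], ρ ∈ (0,1]. Let A be an n×n matrix with entries in [0,1] with A_{ij} ≤ a/n for all i,j, such that each row of A has at least γn entries ≥ ρ/n and each column has at least γ'n entries ≥ ρ/n. Let B = XAY for positive diagonal X, Y, standardized (all row sums 1 or all column sums 1), with B_{ij} ≤ b/n for all i,j, and α(B) < 1 − 1/(γ+γ'). Then for all i,j: B_{ij} ≤ δ·A_{ij}, where δ = a·b² / (ρ²·((γ+γ')(1 − α(B)) − 1)). -/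
open Finset Matrix

/-!
Let `S` be the dense columns of row `i` and `T` the dense rows of column `j`. Since the rows
of `B` sum to one, the block `T × S` carries mass at least `|T| + |S| - n - nα ≥ n D`, where
`D = (γ + γ') (1 - α) - 1`, so some entry `B l k` of the block is at least `D / n`. The diagonal scaling cancels in the cross ratio
`B i j B l k / (B i k B l j) = A i j A l k / (A i k A l j)`, and bounding `B i k, B l j ≤ b/n`,
`A l k ≤ a/n`, `A i k, A l j ≥ ρ/n` gives the claim. The column-stochastic case is the
transpose of the row-stochastic one.
-/

theorem exists_mem_le_of_mul_le_sum {ι : Type*} {s : Finset ι} {f : ι → ℝ} {c N : ℝ}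
    (hc : 0 < c) (hN : 0 < N) (hs : (s.card : ℝ) ≤ N) (h : N * c ≤ ∑ i ∈ s, f i) :
    ∃ i ∈ s, c ≤ f i := by
  by_contra! hlt
  rcases s.eq_empty_or_nonempty with rfl | hne
  · simp only [sum_empty] at h
    nlinarith
  · have : ∑ i ∈ s, f i < s.card * c := by
      simpa using sum_lt_sum_of_nonempty hne hlt
    nlinarith

theorem card_add_card_sub_le_sum_sum_of_sum_row_eq_one {ι κ : Type*} [Fintype ι] [Fintype κ]
    [DecidableEq κ] {B : Matrix ι κ ℝ} (hB : ∀ i j, 0 ≤ B i j) (hrow : ∀ i, ∑ j, B i j = 1)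
    (T : Finset ι) (S : Finset κ) :
    (T.card : ℝ) + S.card - Fintype.card κ - ∑ j, |∑ i, B i j - 1| ≤
      ∑ i ∈ T, ∑ j ∈ S, B i j := by
  have hsplit : ∀ i, ∑ j ∈ S, B i j = 1 - ∑ j ∈ Sᶜ, B i j := fun i => by
    rw [← hrow i, ← sum_add_sum_compl S]
    ring
  have hout : ∑ i ∈ T, ∑ j ∈ Sᶜ, B i j ≤ Fintype.card κ - S.card + ∑ j, |∑ i, B i j - 1| :=
    calc ∑ i ∈ T, ∑ j ∈ Sᶜ, B i j
        ≤ ∑ i, ∑ j ∈ Sᶜ, B i j :=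
          sum_le_sum_of_subset_of_nonneg (subset_univ T)
            fun i _ _ => sum_nonneg fun j _ => hB i j
      _ = ∑ j ∈ Sᶜ, ∑ i, B i j := sum_comm
      _ ≤ ∑ j ∈ Sᶜ, (1 + |∑ i, B i j - 1|) :=
          sum_le_sum fun j _ => by linarith [le_abs_self (∑ i, B i j - 1)]
      _ = Sᶜ.card + ∑ j ∈ Sᶜ, |∑ i, B i j - 1| := by
          rw [sum_add_distrib, sum_const, nsmul_one]
      _ ≤ Fintype.card κ - S.card + ∑ j, |∑ i, B i j - 1| := by
          rw [card_compl, Nat.cast_sub (card_le_univ S)]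
          have : ∑ j ∈ Sᶜ, |∑ i, B i j - 1| ≤ ∑ j, |∑ i, B i j - 1| :=
            sum_le_sum_of_subset_of_nonneg (subset_univ _) fun j _ _ => abs_nonneg _
          linarith
  rw [sum_congr rfl fun i _ => hsplit i, sum_sub_distrib, sum_const, nsmul_one]
  linarith

theorem cross_ratio_eq_of_diagonal_scaling {ι κ : Type*} {A B : Matrix ι κ ℝ} {X : ι → ℝ}
    {Y : κ → ℝ} (hXAY : ∀ i j, B i j = X i * A i j * Y j) (i l : ι) (j k : κ) :
    B i j * B l k * (A i k * A l j) = B i k * B l j * (A i j * A l k) := by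
  simp only [hXAY]
  ring

theorem le_mul_of_cross_ratio_eq {ι κ : Type*} {A B : Matrix ι κ ℝ} {i l : ι} {j k : κ}
    {M K c d : ℝ} (hcross : B i j * B l k * (A i k * A l j) = B i k * B l j * (A i j * A l k))
    (hA : ∀ i j, 0 ≤ A i j) (hB : ∀ i j, 0 ≤ B i j) (hc : 0 < c) (hd : 0 < d)
    (hAik : c ≤ A i k) (hAlj : c ≤ A l j) (hBlk : d ≤ B l k)
    (hBik : B i k ≤ M) (hBlj : B l j ≤ M) (hAlk : A l k ≤ K) :
    B i j ≤ M ^ 2 * K / (c ^ 2 * d) * A i j := by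
  have hBij := hB i j
  rw [div_mul_eq_mul_div, le_div_iff₀ (by positivity)]
  calc B i j * (c ^ 2 * d)
      ≤ B i j * ((A i k * A l j) * B l k) := by
        rw [sq]
        exact mul_le_mul_of_nonneg_left (mul_le_mul (mul_le_mul hAik hAlj hc.le (hA i k)) hBlk
          hd.le (mul_nonneg (hA i k) (hA l j))) hBij
    _ = B i k * B l j * (A i j * A l k) := by rw [← hcross]; ring
    _ ≤ (M * M) * (A i j * K) :=
        mul_le_mul (mul_le_mul hBik hBlj (hB l j) ((hB i k).trans hBik))
          (mul_le_mul_of_nonneg_left hAlk (hA i j)) (mul_nonneg (hA i j) (hA l k))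
          (mul_self_nonneg M)
    _ = M ^ 2 * K * A i j := by ring

theorem le_mul_of_sum_row_eq_one {n : ℕ} {a b γ γ' ρ α : ℝ} (hγγ' : 1 < γ + γ') (hρ : 0 < ρ)
    {A B : Matrix (Fin n) (Fin n) ℝ} (hA : ∀ i j, 0 ≤ A i j) (hAub : ∀ i j, A i j ≤ a / n)
    (hrowdense : ∀ i, γ * n ≤ ((univ.filter (fun j => ρ / n ≤ A i j)).card : ℝ))
    (hcoldense : ∀ j, γ' * n ≤ ((univ.filter (fun i => ρ / n ≤ A i j)).card : ℝ))
    {X Y : Fin n → ℝ} (hX : ∀ i, 0 ≤ X i) (hY : ∀ j, 0 ≤ Y j)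
    (hXAY : ∀ i j, B i j = X i * A i j * Y j) (hBub : ∀ i j, B i j ≤ b / n)
    (hrow : ∀ i, rsum B i = 1) (hαdef : α = (1 / n) * ∑ j, |csum B j - 1|)
    (hα : α < 1 - 1 / (γ + γ')) (i j : Fin n) :
    B i j ≤ (a * b ^ 2 / (ρ ^ 2 * ((γ + γ') * (1 - α) - 1))) * A i j := by
  have hn : (0 : ℝ) < n := Nat.cast_pos.2 i.pos
  set D := (γ + γ') * (1 - α) - 1
  set S := univ.filter (fun k => ρ / n ≤ A i k)
  set T := univ.filter (fun l => ρ / n ≤ A l j)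
  have hB : ∀ l k, 0 ≤ B l k := fun l k => by
    rw [hXAY]
    exact mul_nonneg (mul_nonneg (hX l) (hA l k)) (hY k)
  have hdev : ∑ k, |∑ l, B l k - 1| = n * α := by
    rw [hαdef]
    simp only [csum]
    field_simp
  have hα0 : 0 ≤ α := by
    rw [hαdef]
    exact mul_nonneg (by positivity) (sum_nonneg fun k _ => abs_nonneg _)
  have hD : 0 < D := by
    have : 1 / (γ + γ') * (γ + γ') = 1 := by field_simp
    nlinarith
  have hmass : n * n * (D / n) ≤ ∑ p ∈ T ×ˢ S, B p.1 p.2 := by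
    have := card_add_card_sub_le_sum_sum_of_sum_row_eq_one hB hrow T S
    rw [Fintype.card_fin] at this
    rw [sum_product (f := fun p : Fin n × Fin n => B p.1 p.2), mul_assoc, mul_div_cancel₀ _ hn.ne']
    have hS : γ * n ≤ S.card := hrowdense i
    have hT : γ' * n ≤ T.card := hcoldense j
    have hDle : D ≤ γ + γ' - 1 - α := by nlinarith
    linarith [mul_le_mul_of_nonneg_left hDle hn.le]
  have hcard : ((T ×ˢ S).card : ℝ) ≤ n * n := by
    have hle : ∀ s : Finset (Fin n), (s.card : ℝ) ≤ n := fun s => by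
      exact_mod_cast (card_le_univ s).trans_eq (Fintype.card_fin n)
    rw [card_product, Nat.cast_mul]
    exact mul_le_mul (hle T) (hle S) (Nat.cast_nonneg _) hn.le
  obtain ⟨⟨l, k⟩, hlk, hBlk⟩ :=
    exists_mem_le_of_mul_le_sum (div_pos hD hn) (by positivity) hcard hmass
  obtain ⟨hlT, hkS⟩ := mem_product.mp hlk
  have key := le_mul_of_cross_ratio_eq (cross_ratio_eq_of_diagonal_scaling hXAY i l j k) hA hB
    (div_pos hρ hn) (div_pos hD hn) (mem_filter.mp hkS).2 (mem_filter.mp hlT).2 hBlk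
    (hBub i k) (hBub l j) (hAub l k)
  have hconst : (b / n) ^ 2 * (a / n) / ((ρ / n) ^ 2 * (D / n)) = a * b ^ 2 / (ρ ^ 2 * D) := by
    field_simp
  rwa [hconst] at key

theorem stmt7_general (n : ℕ) (a b γ γ' ρ : ℝ)
    (hγ' : γ' ∈ Set.Ioc (1 - γ) 1)
    (hρ : ρ ∈ Set.Ioc (0 : ℝ) 1)
    (A : Matrix (Fin n) (Fin n) ℝ)
    (hArange : ∀ i j, A i j ∈ Set.Icc (0 : ℝ) 1)
    (hAub : ∀ i j, A i j ≤ a / n)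
    (hrowdense : ∀ i, γ * n ≤
      ((Finset.univ.filter (fun j => ρ / n ≤ A i j)).card : ℝ))
    (hcoldense : ∀ j, γ' * n ≤
      ((Finset.univ.filter (fun i => ρ / n ≤ A i j)).card : ℝ))
    (X Y : Fin n → ℝ) (hX : ∀ i, 0 < X i) (hY : ∀ j, 0 < Y j)
    (B : Matrix (Fin n) (Fin n) ℝ)
    (hXAY : ∀ i j, B i j = X i * A i j * Y j)
    (hBub : ∀ i j, B i j ≤ b / n)
    (αB : ℝ)
    (hstd : ((∀ i, rsum B i = 1) ∧ αB = (1 / n) * ∑ j, |csum B j - 1|) ∨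
            ((∀ j, csum B j = 1) ∧ αB = (1 / n) * ∑ i, |rsum B i - 1|))
    (hα : αB < 1 - 1 / (γ + γ')) :
    ∀ i j, B i j ≤ (a * b ^ 2 / (ρ ^ 2 * ((γ + γ') * (1 - αB) - 1))) * A i j := by
  have hγγ' : 1 < γ + γ' := by linarith [hγ'.1]
  have hA : ∀ i j, 0 ≤ A i j := fun i j => (hArange i j).1
  rcases hstd with ⟨hrow, hαdef⟩ | ⟨hcol, hαdef⟩
  · exact le_mul_of_sum_row_eq_one hγγ' hρ.1 hA hAub hrowdense hcoldense (fun i => (hX i).le)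
      (fun j => (hY j).le) hXAY hBub hrow hαdef hα
  · intro i j
    rw [add_comm γ γ'] at hα ⊢
    exact le_mul_of_sum_row_eq_one (B := Bᵀ) (by linarith) hρ.1 (fun i j => hA j i)
      (fun i j => hAub j i) hcoldense hrowdense (fun j => (hY j).le) (fun i => (hX i).le)
      (fun i j => by simp only [transpose_apply, hXAY]; ring) (fun i j => hBub j i)
      hcol hαdef hα j i

theorem stmt7 (n : ℕ) (hn : 0 < n) (a b γ γ' ρ : ℝ)
    (ha : 0 < a) (hb : 0 < b)
    (hγ : γ ∈ Set.Ioc (0 : ℝ) 1) (hγ' : γ' ∈ Set.Ioc (1 - γ) 1)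
    (hρ : ρ ∈ Set.Ioc (0 : ℝ) 1)
    (A : Matrix (Fin n) (Fin n) ℝ)
    (hArange : ∀ i j, A i j ∈ Set.Icc (0 : ℝ) 1)
    (hAub : ∀ i j, A i j ≤ a / n)
    (hrowdense : ∀ i, γ * n ≤
      ((Finset.univ.filter (fun j => ρ / n ≤ A i j)).card : ℝ))
    (hcoldense : ∀ j, γ' * n ≤
      ((Finset.univ.filter (fun i => ρ / n ≤ A i j)).card : ℝ))
    (X Y : Fin n → ℝ) (hX : ∀ i, 0 < X i) (hY : ∀ j, 0 < Y j)
    (B : Matrix (Fin n) (Fin n) ℝ)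
    (hXAY : ∀ i j, B i j = X i * A i j * Y j)
    (hBub : ∀ i j, B i j ≤ b / n)
    (αB : ℝ)
    (hstd : ((∀ i, rsum B i = 1) ∧ αB = (1 / n) * ∑ j, |csum B j - 1|) ∨
            ((∀ j, csum B j = 1) ∧ αB = (1 / n) * ∑ i, |rsum B i - 1|))
    (hα : αB < 1 - 1 / (γ + γ')) :
    ∀ i j, B i j ≤ (a * b ^ 2 / (ρ ^ 2 * ((γ + γ') * (1 - αB) - 1))) * A i j :=
  stmt7_general n a b γ γ' ρ hγ' hρ A hArange hAub hrowdense hcoldense X Y hX hY B hXAY hBub αB hstd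
    hα
end

section
/- Fix a positive integer n divisible by 10. Define the sequence θ^(k) of positive reals (arising from Sinkhorn–Knopp on a specific structured matrix) by the recurrence θ^(k+2) = θ^(k)(3 − θ^(k)) / (2(1 + θ^(k) − (θ^(k))²)), valid whenever θ^(k) ∈ (0,1). Let ω^(k) = (2θ^(k) − 1)/(1 − θ^(k)). Then ω^(k+2) = 2ω^(k)(2 + ω^(k)) / (5 + 3ω^(k)), and in particular if ω^(k) > 0 then ω^(k+2) > (2/3)·ω^(k). -/
theorem stmt12 (n : ℕ) (hn : 0 < n) (hdvd : 10 ∣ n)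
    (θ : ℕ → ℝ)
    (hrec : ∀ k, θ k ∈ Set.Ioo (0 : ℝ) 1 →
      θ (k + 2) = θ k * (3 - θ k) / (2 * (1 + θ k - (θ k) ^ 2)))
    (ω : ℕ → ℝ) (hω : ∀ k, ω k = (2 * θ k - 1) / (1 - θ k)) :
    ∀ k, θ k ∈ Set.Ioo (0 : ℝ) 1 →
      ω (k + 2) = 2 * ω k * (2 + ω k) / (5 + 3 * ω k) ∧
      (0 < ω k → (2 / 3) * ω k < ω (k + 2)) := by
  intro k hk
  obtain ⟨h0, h1⟩ := hk
  set t := θ k with ht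
  have hden : (0:ℝ) < 1 + t - t ^ 2 := by nlinarith
  have h1t : (0:ℝ) < 1 - t := by linarith
  have hθ2 : θ (k + 2) = t * (3 - t) / (2 * (1 + t - t ^ 2)) := hrec k ⟨h0, h1⟩
  have h1θ2 : 1 - θ (k + 2) = (2 + t) * (1 - t) / (2 * (1 + t - t ^ 2)) := by
    rw [hθ2]; field_simp; ring
  have hωk : ω k = (2 * t - 1) / (1 - t) := hω k
  have hωk2 : ω (k + 2) = (2 * θ (k + 2) - 1) / (1 - θ (k + 2)) := hω (k + 2)
  have h5 : 5 + 3 * ω k = (2 + t) / (1 - t) := by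
    rw [hωk]; field_simp; ring
  have h5pos : (0:ℝ) < 5 + 3 * ω k := by
    rw [h5]; positivity
  have hmain : ω (k + 2) = 2 * ω k * (2 + ω k) / (5 + 3 * ω k) := by
    have h2t : (0:ℝ) < 2 + t := by linarith
    rw [hωk2, h1θ2, hθ2, hωk]
    have hA : (0:ℝ) < (2 + t) * (1 - t) / (2 * (1 + t - t ^ 2)) :=
      div_pos (mul_pos h2t h1t) (by linarith)
    have hB := h5pos
    rw [hωk] at hB
    rw [div_eq_div_iff hA.ne' hB.ne']
    field_simp
    ring
  refine ⟨hmain, fun hpos => ?_⟩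
  rw [hmain]
  rw [lt_div_iff₀ h5pos]
  nlinarith
end

section
/- Consider the Sinkhorn–Knopp algorithm on a 2×2 nonnegative matrix with target marginals u = v = (1/2, 1/2). Suppose at an even step k the matrix has entries A^(k)_{11} = p, A^(k)_{12} = 1/2 − p, A^(k)_{21} = q, A^(k)_{22} = 1/2 − q with p, q ∈ [0, 1/2], p + q ≥ 1/2, and set Δ^(k) = 2(p+q) − 1 ∈ [0,1). Set s = p − q. Then after one column-normalization step and one row-normalization step, the marginal error satisfies A^(k+2)_{11} + A^(k+2)_{21} − 1/2 = 2s²Δ^(k) / ((1 − (Δ^(k))²)² − 4s²(Δ^(k))²), and hence Δ^(k+2) = 4s²Δ^(k) / ((1 − (Δ^(k))²)² − 4s²(Δ^(k))²). Moreover |s| ≤ (1 − Δ^(k))/2, which yields Δ^(k+2) ≤ Δ^(k) / (1 + 2Δ^(k)). -/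
open Finset Matrix

/-!
After the column step the row `(a, 1/2 - a)` sums to `(1 + (1 - 4a)Δ) / (2(1 - Δ²))`, so after the
row step its first entry is `a(1 - Δ) / (1 + (1 - 4a)Δ)`; since `1 - 4a ≥ -1`, the factor
`1 + (1 - 4a)Δ` is at least `1 - Δ > 0`. Adding the rows `a = p` and `a = q` gives the error formula,
whose denominator is the product of the two factors. For the contraction, `4s²/((1 - Δ²)² - 4s²Δ²)`
increases with `s²` and equals `1/(1 + 2Δ)` at `|s| = (1 - Δ)/2`.
-/

theorem rsum_eq_of_row_normalize {m n : ℕ} {A B : Matrix (Fin m) (Fin n) ℝ} {c : ℝ}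
    (hB : ∀ i j, B i j = c * A i j / rsum A i) {i : Fin m} (hA : rsum A i ≠ 0) :
    rsum B i = c := by
  simp only [rsum, hB, ← Finset.sum_div, ← Finset.mul_sum]
  exact mul_div_cancel_right₀ c hA

theorem marginal_error_eq_of_rsum_eq_half {A : Matrix (Fin 2) (Fin 2) ℝ}
    (h0 : rsum A 0 = 1 / 2) (h1 : rsum A 1 = 1 / 2) :
    (∑ i, |rsum A i - 1 / 2|) + (∑ j, |csum A j - 1 / 2|) = 2 * |csum A 0 - 1 / 2| := by
  have htotal : csum A 0 + csum A 1 = rsum A 0 + rsum A 1 := by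
    simp only [csum, rsum, Fin.sum_univ_two]; ring
  have hcol : csum A 1 - 1 / 2 = -(csum A 0 - 1 / 2) := by
    rw [h0, h1] at htotal; linarith
  simp only [Fin.sum_univ_two, h0, h1, hcol, sub_self, abs_zero, abs_neg]
  ring

theorem one_add_mul_pos {a Δ : ℝ} (ha : a ≤ 1 / 2) (hΔ0 : 0 ≤ Δ) (hΔ1 : Δ < 1) :
    0 < 1 + (1 - 4 * a) * Δ := by
  nlinarith

theorem sinkhorn_denominator_eq (p q : ℝ) {Δ : ℝ} (hΔ : Δ = 2 * (p + q) - 1) :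
    (1 - Δ ^ 2) ^ 2 - 4 * (p - q) ^ 2 * Δ ^ 2 = (1 + (1 - 4 * p) * Δ) * (1 + (1 - 4 * q) * Δ) := by
  subst hΔ; ring

theorem sinkhorn_error_eq {p q Δ : ℝ} (hΔ : Δ = 2 * (p + q) - 1)
    (hp : 1 + (1 - 4 * p) * Δ ≠ 0) (hq : 1 + (1 - 4 * q) * Δ ≠ 0) :
    p * (1 - Δ) / (1 + (1 - 4 * p) * Δ) + q * (1 - Δ) / (1 + (1 - 4 * q) * Δ) - 1 / 2 =
      2 * (p - q) ^ 2 * Δ / ((1 - Δ ^ 2) ^ 2 - 4 * (p - q) ^ 2 * Δ ^ 2) := by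
  rw [sinkhorn_denominator_eq p q hΔ, div_add_div _ _ hp hq,
    div_sub_div _ _ (mul_ne_zero hp hq) two_ne_zero,
    div_eq_div_iff (mul_ne_zero (mul_ne_zero hp hq) two_ne_zero) (mul_ne_zero hp hq)]
  subst hΔ
  ring

theorem sinkhorn_error_le {s Δ : ℝ} (hΔ0 : 0 ≤ Δ) (hΔ1 : Δ < 1) (hs : |s| ≤ (1 - Δ) / 2) :
    4 * s ^ 2 * Δ / ((1 - Δ ^ 2) ^ 2 - 4 * s ^ 2 * Δ ^ 2) ≤ Δ / (1 + 2 * Δ) := by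
  have hgap : 0 ≤ (1 - Δ) ^ 2 - 4 * s ^ 2 := by
    nlinarith [sq_le_sq' (abs_le.1 hs).1 (abs_le.1 hs).2]
  have hD : 0 < (1 - Δ ^ 2) ^ 2 - 4 * s ^ 2 * Δ ^ 2 := by
    have : 0 < (1 - Δ) ^ 2 * (1 + 2 * Δ) := by
      have := sub_pos.2 hΔ1
      positivity
    nlinarith [mul_nonneg (sq_nonneg Δ) hgap]
  rw [div_le_div_iff₀ hD (by linarith)]
  nlinarith [mul_nonneg (mul_nonneg hΔ0 (sq_nonneg (1 + Δ))) hgap]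

section TwoByTwoStep

variable {A0 A1 A2 : Matrix (Fin 2) (Fin 2) ℝ} {a Δ : ℝ} {i : Fin 2}

theorem rsum_col_normalize_eq (hplus : 1 + Δ ≠ 0) (hminus : 1 - Δ ≠ 0)
    (hcol0 : csum A0 0 = (1 + Δ) / 2) (hcol1 : csum A0 1 = (1 - Δ) / 2)
    (hA1 : ∀ i j, A1 i j = 1 / 2 * A0 i j / csum A0 j)
    (ha0 : A0 i 0 = a) (ha1 : A0 i 1 = 1 / 2 - a) :
    rsum A1 i = (1 + (1 - 4 * a) * Δ) / (2 * ((1 + Δ) * (1 - Δ))) := by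
  rw [rsum, Fin.sum_univ_two, hA1, hA1, ha0, ha1, hcol0, hcol1]
  field_simp
  ring

theorem sinkhorn_step_row (hplus : 0 < 1 + Δ) (hminus : 0 < 1 - Δ)
    (hcol0 : csum A0 0 = (1 + Δ) / 2) (hcol1 : csum A0 1 = (1 - Δ) / 2)
    (hA1 : ∀ i j, A1 i j = 1 / 2 * A0 i j / csum A0 j)
    (hA2 : ∀ i j, A2 i j = 1 / 2 * A1 i j / rsum A1 i)
    (ha0 : A0 i 0 = a) (ha1 : A0 i 1 = 1 / 2 - a) (hfactor : 0 < 1 + (1 - 4 * a) * Δ) :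
    rsum A2 i = 1 / 2 ∧ A2 i 0 = a * (1 - Δ) / (1 + (1 - 4 * a) * Δ) := by
  have hrsum := rsum_col_normalize_eq hplus.ne' hminus.ne' hcol0 hcol1 hA1 ha0 ha1
  constructor
  · refine rsum_eq_of_row_normalize hA2 (ne_of_gt ?_)
    rw [hrsum]
    positivity
  · rw [hA2, hA1, hcol0, hrsum, ha0]
    field_simp [hfactor.ne']

end TwoByTwoStep

theorem stmt13_general (p q : ℝ)
    (hp : p ∈ Set.Icc (0 : ℝ) (1 / 2)) (hq : q ∈ Set.Icc (0 : ℝ) (1 / 2))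
    (hpq : 1 / 2 ≤ p + q) (hpq1 : p + q < 1)
    (Δ s : ℝ) (hΔ : Δ = 2 * (p + q) - 1) (hs : s = p - q)
    -- the matrix at the even step k
    (A0 : Matrix (Fin 2) (Fin 2) ℝ)
    (hA0 : A0 = !![p, 1 / 2 - p; q, 1 / 2 - q])
    -- one column-normalization step (columns scaled to sum 1/2)
    (A1 : Matrix (Fin 2) (Fin 2) ℝ)
    (hA1 : ∀ i j, A1 i j = (1 / 2) * A0 i j / csum A0 j)
    -- one row-normalization step (rows scaled to sum 1/2)
    (A2 : Matrix (Fin 2) (Fin 2) ℝ)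
    (hA2 : ∀ i j, A2 i j = (1 / 2) * A1 i j / rsum A1 i) :
    A2 0 0 + A2 1 0 - 1 / 2 =
      2 * s ^ 2 * Δ / ((1 - Δ ^ 2) ^ 2 - 4 * s ^ 2 * Δ ^ 2) ∧
    (∑ i, |rsum A2 i - 1 / 2|) + (∑ j, |csum A2 j - 1 / 2|) =
      4 * s ^ 2 * Δ / ((1 - Δ ^ 2) ^ 2 - 4 * s ^ 2 * Δ ^ 2) ∧
    |s| ≤ (1 - Δ) / 2 ∧
    (∑ i, |rsum A2 i - 1 / 2|) + (∑ j, |csum A2 j - 1 / 2|) ≤ Δ / (1 + 2 * Δ) := by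
  subst hs
  have hΔ0 : 0 ≤ Δ := by linarith
  have hΔ1 : Δ < 1 := by linarith
  have hplus : 0 < 1 + Δ := by linarith
  have hminus : 0 < 1 - Δ := by linarith
  have hp0 : A0 0 0 = p := by simp [hA0]
  have hq0 : A0 1 0 = q := by simp [hA0]
  have hp1 : A0 0 1 = 1 / 2 - p := by simp [hA0]
  have hq1 : A0 1 1 = 1 / 2 - q := by simp [hA0]
  have hcol0 : csum A0 0 = (1 + Δ) / 2 := by
    rw [csum, Fin.sum_univ_two, hp0, hq0]; linarith
  have hcol1 : csum A0 1 = (1 - Δ) / 2 := by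
    rw [csum, Fin.sum_univ_two, hp1, hq1]; linarith
  have hfactor_p := one_add_mul_pos hp.2 hΔ0 hΔ1
  have hfactor_q := one_add_mul_pos hq.2 hΔ0 hΔ1
  obtain ⟨hrsum_p, hentry_p⟩ :=
    sinkhorn_step_row hplus hminus hcol0 hcol1 hA1 hA2 hp0 hp1 hfactor_p
  obtain ⟨hrsum_q, hentry_q⟩ :=
    sinkhorn_step_row hplus hminus hcol0 hcol1 hA1 hA2 hq0 hq1 hfactor_q
  have hfirst : A2 0 0 + A2 1 0 - 1 / 2 =
      2 * (p - q) ^ 2 * Δ / ((1 - Δ ^ 2) ^ 2 - 4 * (p - q) ^ 2 * Δ ^ 2) := by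
    rw [hentry_p, hentry_q]
    exact sinkhorn_error_eq hΔ hfactor_p.ne' hfactor_q.ne'
  have herror : (∑ i, |rsum A2 i - 1 / 2|) + (∑ j, |csum A2 j - 1 / 2|) =
      4 * (p - q) ^ 2 * Δ / ((1 - Δ ^ 2) ^ 2 - 4 * (p - q) ^ 2 * Δ ^ 2) := by
    rw [marginal_error_eq_of_rsum_eq_half hrsum_p hrsum_q, csum, Fin.sum_univ_two, hfirst,
      abs_of_nonneg]
    · ring
    · rw [sinkhorn_denominator_eq p q hΔ]
      positivity
  have hs : |p - q| ≤ (1 - Δ) / 2 := abs_le.2 ⟨by linarith [hq.2], by linarith [hp.2]⟩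
  exact ⟨hfirst, herror, hs, herror ▸ sinkhorn_error_le hΔ0 hΔ1 hs⟩

theorem stmt13 (p q : ℝ)
    (hp : p ∈ Set.Icc (0 : ℝ) (1 / 2)) (hq : q ∈ Set.Icc (0 : ℝ) (1 / 2))
    (hpq : 1 / 2 ≤ p + q) (hpq1 : p + q < 1)
    (Δ s : ℝ) (hΔ : Δ = 2 * (p + q) - 1) (hs : s = p - q)
    -- the matrix at the even step k
    (A0 : Matrix (Fin 2) (Fin 2) ℝ)
    (hA0 : A0 = !![p, 1 / 2 - p; q, 1 / 2 - q])
    -- one column-normalization step (columns scaled to sum 1/2)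
    (A1 : Matrix (Fin 2) (Fin 2) ℝ)
    (hA1 : ∀ i j, A1 i j = (1 / 2) * A0 i j / csum A0 j)
    (hA1pos : ∀ i, 0 < rsum A1 i)
    -- one row-normalization step (rows scaled to sum 1/2)
    (A2 : Matrix (Fin 2) (Fin 2) ℝ)
    (hA2 : ∀ i j, A2 i j = (1 / 2) * A1 i j / rsum A1 i) :
    A2 0 0 + A2 1 0 - 1 / 2 =
      2 * s ^ 2 * Δ / ((1 - Δ ^ 2) ^ 2 - 4 * s ^ 2 * Δ ^ 2) ∧
    (∑ i, |rsum A2 i - 1 / 2|) + (∑ j, |csum A2 j - 1 / 2|) =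
      4 * s ^ 2 * Δ / ((1 - Δ ^ 2) ^ 2 - 4 * s ^ 2 * Δ ^ 2) ∧
    |s| ≤ (1 - Δ) / 2 ∧
    (∑ i, |rsum A2 i - 1 / 2|) + (∑ j, |csum A2 j - 1 / 2|) ≤ Δ / (1 + 2 * Δ) :=
  stmt13_general p q hp hq hpq hpq1 Δ s hΔ hs A0 hA0 A1 hA1 A2 hA2
end

section
/- Let x ∈ (−1, 1/7) and define f(x) = 42·ln(1+x) + 6·ln(1−7x). Then f is increasing on (−1,0) and decreasing on (0,1/7), f(0) = 0, and for any t ∈ (0, 1/49] and any x with |x| ≥ 4t/7, one has (1+x)^42·(1−7x)^6 ≤ max{(1+4t/7)^42·(1−4t)^6, (1−4t/7)^42·(1+4t)^6} = (1−4t/7)^42·(1+4t)^6 < 1. -/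
/-!
Write `f = 6 g` with `g x = 7 log (1 + x) + log (1 - 7x)`, the logarithm of `(1 + x)^7 (1 - 7x)`,
a product of eight numbers with sum `8`. Since `g' x = -56 x / ((1 + x)(1 - 7x))`, `g` increases
up to its maximum `g 0 = 0` and then decreases, so for `|x| ≥ u` the value `g x` is at most
`max (g u) (g (-u))`. The maximum is attained at `-u`: the odd polynomial
`(1 - u)^7 (1 + 7u) - (1 + u)^7 (1 - 7u) = 224u³ + 448u⁵ + 96u⁷` is positive for `u > 0`.
-/

open Real Set

noncomputable def logAmgm (c x : ℝ) : ℝ := c * log (1 + x) + log (1 - c * x)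

section

variable {c x : ℝ}

@[simp]
lemma logAmgm_zero (c : ℝ) : logAmgm c 0 = 0 := by simp [logAmgm]

lemma hasDerivAt_logAmgm (hx : 0 < 1 + x) (hcx : 0 < 1 - c * x) :
    HasDerivAt (logAmgm c) (c / (1 + x) - c / (1 - c * x)) x := by
  have hlog₁ := ((hasDerivAt_id' x).const_add 1).log hx.ne'
  have hlog₂ := (((hasDerivAt_id' x).const_mul c).const_sub 1).log hcx.ne'
  exact ((hlog₁.const_mul c).add hlog₂).congr_deriv (by ring)

lemma strictMonoOn_logAmgm (hc : 0 < c) : StrictMonoOn (logAmgm c) (Ioc (-1) 0) := by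
  have hderiv : ∀ x ∈ Ioc (-1 : ℝ) 0, HasDerivAt (logAmgm c) (c / (1 + x) - c / (1 - c * x)) x :=
    fun x hx => hasDerivAt_logAmgm (by linarith [hx.1]) (by nlinarith [hx.2])
  refine strictMonoOn_of_deriv_pos (convex_Ioc _ _)
    (fun x hx => (hderiv x hx).continuousAt.continuousWithinAt) fun x hx => ?_
  rw [interior_Ioc] at hx
  rw [(hderiv x (Ioo_subset_Ioc_self hx)).deriv, sub_pos]
  exact div_lt_div_of_pos_left hc (by linarith [hx.1]) (by nlinarith [hx.2])

lemma strictAntiOn_logAmgm (hc : 0 < c) : StrictAntiOn (logAmgm c) (Ico 0 (1 / c)) := by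
  have hcx : ∀ x ∈ Ico 0 (1 / c), 0 < 1 - c * x := fun x hx => by
    have := (lt_div_iff₀' hc).1 hx.2
    linarith
  have hderiv : ∀ x ∈ Ico 0 (1 / c), HasDerivAt (logAmgm c) (c / (1 + x) - c / (1 - c * x)) x :=
    fun x hx => hasDerivAt_logAmgm (by linarith [hx.1]) (hcx x hx)
  refine strictAntiOn_of_deriv_neg (convex_Ico _ _)
    (fun x hx => (hderiv x hx).continuousAt.continuousWithinAt) fun x hx => ?_
  rw [interior_Ico] at hx
  rw [(hderiv x (Ioo_subset_Ico_self hx)).deriv, sub_neg]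
  exact div_lt_div_of_pos_left hc (hcx x (Ioo_subset_Ico_self hx)) (by nlinarith [hx.1])

lemma exp_logAmgm (n : ℕ) (hx : 0 < 1 + x) (hnx : 0 < 1 - n * x) :
    exp (logAmgm n x) = (1 + x) ^ n * (1 - n * x) := by
  rw [logAmgm, exp_add, exp_nat_mul, exp_log hx, exp_log hnx]

lemma logAmgm_neg (hc : 0 < c) (hx₁ : -1 < x) (hx : x < 0) : logAmgm c x < 0 := by
  simpa using strictMonoOn_logAmgm hc ⟨hx₁, hx.le⟩ ⟨neg_one_lt_zero, le_rfl⟩ hx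

end

lemma exp_six_mul_logAmgm_seven {x : ℝ} (hx : x ∈ Ioo (-1) (1 / 7)) :
    exp (6 * logAmgm 7 x) = (1 + x) ^ 42 * (1 - 7 * x) ^ 6 := by
  have hexp := exp_logAmgm 7 (x := x) (by linarith [hx.1]) (by push_cast; linarith [hx.2])
  push_cast at hexp
  rw [show 42 = 7 * 6 by rfl, pow_mul, ← mul_pow, ← hexp, ← exp_nat_mul]
  norm_num

lemma logAmgm_seven_lt_neg {u : ℝ} (hu : u ∈ Ioo 0 (1 / 7)) :
    logAmgm 7 u < logAmgm 7 (-u) := by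
  obtain ⟨hu₀, hu₁⟩ := hu
  have hpoly : (1 + u) ^ 7 * (1 - 7 * u) < (1 + -u) ^ 7 * (1 - 7 * -u) := by
    have hdiff : (1 + -u) ^ 7 * (1 - 7 * -u) - (1 + u) ^ 7 * (1 - 7 * u)
        = u ^ 3 * (224 + 448 * u ^ 2 + 96 * u ^ 4) := by ring
    have : 0 < u ^ 3 * (224 + 448 * u ^ 2 + 96 * u ^ 4) := by positivity
    linarith
  rw [← exp_lt_exp]
  convert hpoly using 1 <;> exact_mod_cast exp_logAmgm 7 (by linarith) (by push_cast; linarith)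

lemma logAmgm_seven_le_of_le_abs {u x : ℝ} (hu : u ∈ Ioo 0 (1 / 7)) (hx : x ∈ Ioo (-1) (1 / 7))
    (hux : u ≤ |x|) : logAmgm 7 x ≤ logAmgm 7 (-u) := by
  have hmono := strictMonoOn_logAmgm (c := 7) (by norm_num)
  have hanti := strictAntiOn_logAmgm (c := 7) (by norm_num)
  rcases le_abs'.1 hux with hneg | hpos
  · exact (hmono.le_iff_le ⟨hx.1, by linarith [hu.1]⟩ ⟨by linarith [hu.2], by linarith [hu.1]⟩).2
      hneg
  · calc logAmgm 7 x ≤ logAmgm 7 u :=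
          (hanti.le_iff_ge ⟨by linarith [hu.1], by linarith [hx.2]⟩ ⟨hu.1.le, by linarith [hu.2]⟩).2
            hpos
      _ ≤ logAmgm 7 (-u) := (logAmgm_seven_lt_neg hu).le

theorem stmt15 (f : ℝ → ℝ)
    (hf : ∀ x, f x = 42 * Real.log (1 + x) + 6 * Real.log (1 - 7 * x)) :
    StrictMonoOn f (Set.Ioo (-1 : ℝ) 0) ∧
    StrictAntiOn f (Set.Ioo (0 : ℝ) (1 / 7)) ∧
    f 0 = 0 ∧
    (∀ t : ℝ, t ∈ Set.Ioc (0 : ℝ) (1 / 49) →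
      ∀ x : ℝ, x ∈ Set.Ioo (-1 : ℝ) (1 / 7) → 4 * t / 7 ≤ |x| →
        (1 + x) ^ 42 * (1 - 7 * x) ^ 6 ≤
          max ((1 + 4 * t / 7) ^ 42 * (1 - 4 * t) ^ 6)
              ((1 - 4 * t / 7) ^ 42 * (1 + 4 * t) ^ 6) ∧
        max ((1 + 4 * t / 7) ^ 42 * (1 - 4 * t) ^ 6)
            ((1 - 4 * t / 7) ^ 42 * (1 + 4 * t) ^ 6) =
          (1 - 4 * t / 7) ^ 42 * (1 + 4 * t) ^ 6 ∧
        (1 - 4 * t / 7) ^ 42 * (1 + 4 * t) ^ 6 < 1) := by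
  have hfg : f = fun x => 6 * logAmgm 7 x := funext fun x => by rw [hf, logAmgm]; ring
  subst hfg
  have hscale : StrictMono fun y : ℝ => 6 * y := strictMono_mul_left_of_pos (by norm_num)
  refine ⟨hscale.comp_strictMonoOn ((strictMonoOn_logAmgm (by norm_num)).mono Ioo_subset_Ioc_self),
    hscale.comp_strictAntiOn ((strictAntiOn_logAmgm (by norm_num)).mono Ioo_subset_Ico_self),
    by simp, ?_⟩
  rintro t ⟨ht₀, ht₁⟩ x hx hxt
  set u := 4 * t / 7 with hu_def
  have hu : u ∈ Ioo 0 (1 / 7) := ⟨by positivity, by linarith [hu_def]⟩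
  have hA := exp_six_mul_logAmgm_seven (x := u) ⟨by linarith [hu.1], hu.2⟩
  have hB := exp_six_mul_logAmgm_seven (x := -u) ⟨by linarith [hu.2], by linarith [hu.1]⟩
  rw [show 1 - 7 * u = 1 - 4 * t by ring] at hA
  rw [show 1 + -u = 1 - u by ring, show 1 - 7 * -u = 1 + 4 * t by ring] at hB
  have hx_le := logAmgm_seven_le_of_le_abs hu hx hxt
  have hsym := logAmgm_seven_lt_neg hu
  have hneg := logAmgm_neg (c := 7) (by norm_num) (by linarith [hu.2]) (neg_lt_zero.2 hu.1)
  rw [← exp_six_mul_logAmgm_seven hx, ← hA, ← hB]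
  exact ⟨le_max_of_le_right (exp_le_exp.2 (by linarith)), max_eq_right (exp_le_exp.2 (by linarith)),
    exp_lt_one_iff.2 (by linarith)⟩
end
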